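/- arXiv:2010.09841 — 3 statements merged into one kernel-verified Lean document; each statement's English description precedes it below -/
import Mathlib

section
/- Let $\lambda$ be a Young diagram (a finite down-closed subset of $\mathbb{N}^2$) with $n$ boxes, let $\alpha_0,\dots,\alpha_m$ denote the minimal generators of the corresponding monomial ideal listed from bottom to top, and for each $i < m$ let $p_i$ be the difference in $y$-coordinate between $\alpha_{i+1}$ and $\alpha_i$. For each $i$ let $P_{\alpha_i}$ be the set of boxes $\beta \in \lambda$ lying strictly to the left of $\alpha_i$ (smaller $x$-coordinate) such that shifting $\beta$ upward by $p_i$ in the $y$-direction leaves $\lambda$. Then $\sum_i |P_{\alpha_i}| = n$. -/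
/-!
Write `α i = (A i, B i)` and `p i = B (i+1) - B i`. Every box with `x < A i` and `y < B (i+1)`
lies in `λ`. Inside the lower set `{β ∈ λ | β.1 < A i}`, the upward shift by `p i` maps the boxes
that stay in the set bijectively onto the boxes of height `≥ p i`, so the boxes that leave are as
many as the boxes of height `< p i`, namely `A i * p i`. On the other hand each row of `λ` with
`B i ≤ y < B (i+1)` has length `A i`, and since `B 0 = 0` and `A m = 0` these bands of rows
exhaust `λ`; hence `∑ i, A i * p i = n`.
-/

open Finset

theorem Fin.sum_sum_Ico_consecutive {M : Type*} [AddCommMonoid M] (f : ℕ → M) :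
    ∀ {m : ℕ} {b : Fin (m + 1) → ℕ}, Monotone b →
      ∑ i : Fin m, ∑ r ∈ Ico (b i.castSucc) (b i.succ), f r =
        ∑ r ∈ Ico (b 0) (b (Fin.last m)), f r
  | 0, _, _ => by simp
  | m + 1, b, hb => by
    have ih := Fin.sum_sum_Ico_consecutive f (b := fun i => b i.castSucc)
      (hb.comp Fin.strictMono_castSucc.monotone)
    simp only [Fin.castSucc_zero, ← Fin.succ_castSucc] at ih
    rw [Fin.sum_univ_castSucc, ih]
    exact sum_Ico_consecutive f (hb (Fin.zero_le _)) (hb (Fin.castSucc_le_succ _))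

theorem card_filter_shift_notMem {ι : Type*} [DecidableEq ι] (T : Finset (ι × ℕ)) (p : ℕ)
    (hT : ∀ a r, (a, r + p) ∈ T → (a, r) ∈ T) :
    #{β ∈ T | (β.1, β.2 + p) ∉ T} = #{β ∈ T | β.2 < p} := by
  have hshift : #{β ∈ T | (β.1, β.2 + p) ∈ T} = #{β ∈ T | ¬ β.2 < p} := by
    refine card_nbij' (fun β => (β.1, β.2 + p)) (fun γ => (γ.1, γ.2 - p)) ?_ ?_ ?_ ?_
    · intro β hβ
      simp only [coe_filter, Set.mem_ofPred_eq] at hβ ⊢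
      exact ⟨hβ.2, by omega⟩
    · intro γ hγ
      simp only [coe_filter, Set.mem_ofPred_eq, not_lt] at hγ ⊢
      have hγT : (γ.1, γ.2 - p + p) ∈ T := by simpa [Nat.sub_add_cancel hγ.2] using hγ.1
      exact ⟨hT _ _ hγT, hγT⟩
    · intro β _
      simp
    · intro γ hγ
      simp only [coe_filter, Set.mem_ofPred_eq, not_lt] at hγ
      simp [Nat.sub_add_cancel hγ.2]
  have h1 := card_filter_add_card_filter_not (s := T) fun β => (β.1, β.2 + p) ∈ T
  have h2 := card_filter_add_card_filter_not (s := T) fun β => β.2 < p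
  omega

section Generators

variable {lam : Finset (ℕ × ℕ)} {m : ℕ} {α : Fin (m + 1) → ℕ × ℕ}

theorem generator_notMem (hα : ∀ p, Minimal (· ∉ lam) p ↔ p ∈ Set.range α) (i : Fin (m + 1)) :
    α i ∉ lam :=
  ((hα _).2 ⟨i, rfl⟩).prop

theorem exists_generator_le (hα : ∀ p, Minimal (· ∉ lam) p ↔ p ∈ Set.range α) {q : ℕ × ℕ}
    (hq : q ∉ lam) : ∃ i, α i ≤ q := by
  obtain ⟨p, hpq, hp⟩ := exists_minimal_le_of_wellFoundedLT (· ∉ lam) q hq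
  obtain ⟨i, rfl⟩ := (hα p).1 hp
  exact ⟨i, hpq⟩

variable (hα : ∀ p, Minimal (· ∉ lam) p ↔ p ∈ Set.range α) (hmono : StrictMono fun i => (α i).2)
include hα hmono

theorem generator_fst_strictAnti : StrictAnti fun i => (α i).1 := by
  intro i j hij
  by_contra! hle
  have hji : α j ≤ α i := ((hα _).2 ⟨j, rfl⟩).2 (generator_notMem hα i) ⟨hle, (hmono hij).le⟩
  exact (hmono hij).not_ge hji.2

theorem mem_of_lt_generator_fst_of_lt_generator_snd (i : Fin m) {c r : ℕ}
    (hc : c < (α i.castSucc).1) (hr : r < (α i.succ).2) : (c, r) ∈ lam := by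
  by_contra hcr
  obtain ⟨k, hk⟩ := exists_generator_le hα hcr
  rcases le_or_gt k i.castSucc with hki | hik
  · have := (generator_fst_strictAnti hα hmono).antitone hki
    exact absurd hk.1 (by simpa using hc.trans_le this)
  · have := hmono.monotone (Fin.castSucc_lt_iff_succ_le.1 hik)
    exact absurd hk.2 (by simpa using hr.trans_le this)

theorem generator_zero_snd : (α 0).2 = 0 := by
  have hq : (lam.sup Prod.fst + 1, 0) ∉ lam := fun h =>
    (Nat.lt_succ_self _).not_ge (le_sup (f := Prod.fst) h)
  obtain ⟨j, hj⟩ := exists_generator_le hα hq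
  exact Nat.eq_zero_of_le_zero ((hmono.monotone (Fin.zero_le j)).trans hj.2)

theorem generator_last_fst : (α (Fin.last m)).1 = 0 := by
  have hq : (0, lam.sup Prod.snd + 1) ∉ lam := fun h =>
    (Nat.lt_succ_self _).not_ge (le_sup (f := Prod.snd) h)
  obtain ⟨j, hj⟩ := exists_generator_le hα hq
  exact Nat.eq_zero_of_le_zero
    (((generator_fst_strictAnti hα hmono).antitone (Fin.le_last j)).trans hj.1)

variable (hlam : IsLowerSet (lam : Set (ℕ × ℕ)))
include hlam

theorem snd_lt_generator_last_snd {β : ℕ × ℕ} (hβ : β ∈ lam) : β.2 < (α (Fin.last m)).2 := by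
  by_contra! h
  refine generator_notMem hα (Fin.last m) (hlam ⟨?_, h⟩ hβ)
  simp [generator_last_fst hα hmono]

theorem card_eq_sum_card_row :
    #lam = ∑ r ∈ range (α (Fin.last m)).2, #{β ∈ lam | β.2 = r} :=
  card_eq_sum_card_fiberwise fun _ hβ => mem_range.2 (snd_lt_generator_last_snd hα hmono hlam hβ)

theorem card_row (i : Fin m) {r : ℕ} (hr : r ∈ Ico (α i.castSucc).2 (α i.succ).2) :
    #{β ∈ lam | β.2 = r} = (α i.castSucc).1 := by
  rw [mem_Ico] at hr
  have hrow : {β ∈ lam | β.2 = r} = range (α i.castSucc).1 ×ˢ {r} := by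
    ext ⟨c, r'⟩
    simp only [mem_filter, mem_product, mem_range, mem_singleton]
    constructor
    · rintro ⟨hc, rfl⟩
      refine ⟨?_, rfl⟩
      by_contra! h
      exact generator_notMem hα i.castSucc (hlam ⟨h, hr.1⟩ hc)
    · rintro ⟨hc, rfl⟩
      exact ⟨mem_of_lt_generator_fst_of_lt_generator_snd hα hmono i hc hr.2, rfl⟩
  rw [hrow, card_product, card_range, card_singleton, mul_one]

theorem card_P_eq_mul (i : Fin m) :
    #{β ∈ lam | β.1 < (α i.castSucc).1 ∧
      (β.1, β.2 + ((α i.succ).2 - (α i.castSucc).2)) ∉ lam} =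
      (α i.castSucc).1 * ((α i.succ).2 - (α i.castSucc).2) := by
  set A := (α i.castSucc).1
  set p := (α i.succ).2 - (α i.castSucc).2
  set T := {β ∈ lam | β.1 < A}
  have hP : {β ∈ lam | β.1 < A ∧ (β.1, β.2 + p) ∉ lam} = {β ∈ T | (β.1, β.2 + p) ∉ T} := by
    ext β
    simp only [T, mem_filter, not_and]
    tauto
  have hT : ∀ c r, (c, r + p) ∈ T → (c, r) ∈ T := fun c r h => by
    simp only [T, mem_filter] at h ⊢
    exact ⟨hlam (show (c, r) ≤ (c, r + p) from ⟨le_rfl, Nat.le_add_right r p⟩) h.1, h.2⟩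
  have hbottom : {β ∈ T | β.2 < p} = range A ×ˢ range p := by
    ext ⟨c, r⟩
    simp only [T, mem_filter, mem_product, mem_range]
    refine ⟨fun h => ⟨h.1.2, h.2⟩, fun h => ⟨⟨?_, h.1⟩, h.2⟩⟩
    exact mem_of_lt_generator_fst_of_lt_generator_snd hα hmono i h.1 (by omega)
  rw [hP, card_filter_shift_notMem T p hT, hbottom, card_product, card_range, card_range]

end Generators

/-- Counting arrows of the first kind: for a Young diagram `lam` with `n` boxes whose
complement has minimal elements (generators) `α 0, …, α m` ordered by increasing
`y`-coordinate, summing over the generators the number of boxes strictly to the left of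
`α i` that leave the diagram when shifted up by `p i = y (α (i+1)) - y (α i)` gives `n`. -/
theorem sum_P_eq_n (n m : ℕ) (lam : Finset (ℕ × ℕ))
    (hdc : ∀ p ∈ lam, ∀ q : ℕ × ℕ, q.1 ≤ p.1 → q.2 ≤ p.2 → q ∈ lam)
    (hcard : lam.card = n)
    (α : Fin (m + 1) → ℕ × ℕ)
    (hmono : StrictMono fun i => (α i).2)
    (hmin : ∀ p : ℕ × ℕ,
      (p ∉ lam ∧ ∀ q : ℕ × ℕ, q ≤ p → q ≠ p → q ∈ lam) ↔ ∃ i, α i = p) :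
    ∑ i : Fin m,
      (lam.filter fun β => β.1 < (α i.castSucc).1 ∧
        (β.1, β.2 + ((α i.succ).2 - (α i.castSucc).2)) ∉ lam).card = n := by
  have hlam : IsLowerSet (lam : Set (ℕ × ℕ)) := fun _ _ hle hp => hdc _ hp _ hle.1 hle.2
  have hα : ∀ p, Minimal (· ∉ lam) p ↔ p ∈ Set.range α := fun p => by
    rw [Set.mem_range, ← hmin, minimal_iff_forall_lt]
    simp only [lt_iff_le_and_ne, not_not, and_imp]
  calc ∑ i : Fin m, #{β ∈ lam | β.1 < (α i.castSucc).1 ∧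
        (β.1, β.2 + ((α i.succ).2 - (α i.castSucc).2)) ∉ lam}
      = ∑ i : Fin m, ∑ r ∈ Ico (α i.castSucc).2 (α i.succ).2, #{β ∈ lam | β.2 = r} := by
        refine sum_congr rfl fun i _ => ?_
        rw [card_P_eq_mul hα hmono hlam, sum_congr rfl fun r => card_row hα hmono hlam i, sum_const,
          Nat.card_Ico, smul_eq_mul, mul_comm]
    _ = ∑ r ∈ Ico (α 0).2 (α (Fin.last m)).2, #{β ∈ lam | β.2 = r} :=
        Fin.sum_sum_Ico_consecutive _ hmono.monotone
    _ = n := by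
        rw [generator_zero_snd hα hmono, ← range_eq_Ico,
          ← card_eq_sum_card_row hα hmono hlam, hcard]
end

section
/- Let $R = \mathbb{C}[x,y,z]$ and $I = (x^3, y^2, x^2z, xz^2, yz^2, z^3)$. Then $\dim_{\mathbb{C}} R/I = 11$ and $\dim_{\mathbb{C}} \operatorname{Hom}_R(I, R/I) = 33$. -/
open MvPolynomial Finset

set_option maxHeartbeats 2000000
set_option maxRecDepth 20000

namespace NSE

abbrev Rp := MvPolynomial (Fin 3) ℂ
abbrev exps := Fin 3 →₀ ℕ

noncomputable def E (a b c : ℕ) : exps :=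
  Finsupp.single 0 a + Finsupp.single 1 b + Finsupp.single 2 c

lemma E_apply0 (a b c : ℕ) : E a b c 0 = a := by
  simp [E, Finsupp.single_apply]

lemma E_apply1 (a b c : ℕ) : E a b c 1 = b := by
  simp [E, Finsupp.single_apply]

lemma E_apply2 (a b c : ℕ) : E a b c 2 = c := by
  simp [E, Finsupp.single_apply]

lemma E_eta (d : exps) : E (d 0) (d 1) (d 2) = d := by
  ext i
  fin_cases i <;> simp [E_apply0, E_apply1, E_apply2]

lemma E_add (a b c a' b' c' : ℕ) :
    E a b c + E a' b' c' = E (a + a') (b + b') (c + c') := by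
  ext i
  fin_cases i <;>
    simp [Finsupp.add_apply, E_apply0, E_apply1, E_apply2]

lemma E_tsub (a b c a' b' c' : ℕ) :
    E a b c - E a' b' c' = E (a - a') (b - b') (c - c') := by
  ext i
  fin_cases i <;>
    simp [Finsupp.tsub_apply, E_apply0, E_apply1, E_apply2]

lemma E_le (a b c a' b' c' : ℕ) :
    E a b c ≤ E a' b' c' ↔ a ≤ a' ∧ b ≤ b' ∧ c ≤ c' := by
  rw [Finsupp.le_def]
  constructor
  · intro h
    exact ⟨by simpa [E_apply0] using h 0, by simpa [E_apply1] using h 1,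
      by simpa [E_apply2] using h 2⟩
  · rintro ⟨h0, h1, h2⟩ i
    fin_cases i <;> simpa [E_apply0, E_apply1, E_apply2]

lemma E_eq (a b c a' b' c' : ℕ) :
    E a b c = E a' b' c' ↔ a = a' ∧ b = b' ∧ c = c' := by
  constructor
  · intro h
    refine ⟨?_, ?_, ?_⟩
    · simpa [E_apply0] using congrArg (fun f => f 0) h
    · simpa [E_apply1] using congrArg (fun f => f 1) h
    · simpa [E_apply2] using congrArg (fun f => f 2) h
  · rintro ⟨rfl, rfl, rfl⟩; rfl

lemma E_sup (a b c a' b' c' : ℕ) :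
    E a b c ⊔ E a' b' c' = E (max a a') (max b b') (max c c') := by
  ext i
  fin_cases i <;>
    simp [Finsupp.sup_apply, E_apply0, E_apply1, E_apply2]



/-! ### Data tables -/

def mA : Fin 11 → ℕ := ![0,0,0,0,0,1,1,1,1,2,2]
def mB : Fin 11 → ℕ := ![0,0,0,1,1,0,0,1,1,0,1]
def mC : Fin 11 → ℕ := ![0,1,2,0,1,0,1,0,1,0,0]

noncomputable def m (k : Fin 11) : exps := E (mA k) (mB k) (mC k)

def uA : Fin 6 → ℕ := ![3,0,2,1,0,0]
def uB : Fin 6 → ℕ := ![0,2,0,0,1,0]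
def uC : Fin 6 → ℕ := ![0,0,1,2,2,3]

noncomputable def u (j : Fin 6) : exps := E (uA j) (uB j) (uC j)

def Std (d : exps) : Prop := ∀ j : Fin 6, ¬ u j ≤ d

lemma Std_E (a b c : ℕ) :
    Std (E a b c) ↔ ∀ j : Fin 6, ¬ (uA j ≤ a ∧ uB j ≤ b ∧ uC j ≤ c) := by
  unfold Std u
  simp only [E_le]

lemma m_inj : Function.Injective m := by
  intro k l h
  rw [m, m, E_eq] at h
  revert h
  revert k l
  decide

lemma not_std_mono {d d' : exps} (h : d ≤ d') (hd : ¬ Std d) : ¬ Std d' := by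
  intro hs
  exact hd fun j hj => hs j (hj.trans h)

lemma std_complete {d : exps} (h : Std d) : ∃ k, d = m k := by
  rw [← E_eta d] at h ⊢
  rw [Std_E] at h
  have h0 : ¬ ((3:ℕ) ≤ d 0 ∧ (0:ℕ) ≤ d 1 ∧ (0:ℕ) ≤ d 2) := h 0
  have h1 : ¬ ((0:ℕ) ≤ d 0 ∧ (2:ℕ) ≤ d 1 ∧ (0:ℕ) ≤ d 2) := h 1
  have h2 : ¬ ((2:ℕ) ≤ d 0 ∧ (0:ℕ) ≤ d 1 ∧ (1:ℕ) ≤ d 2) := h 2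
  have h3 : ¬ ((1:ℕ) ≤ d 0 ∧ (0:ℕ) ≤ d 1 ∧ (2:ℕ) ≤ d 2) := h 3
  have h4 : ¬ ((0:ℕ) ≤ d 0 ∧ (1:ℕ) ≤ d 1 ∧ (2:ℕ) ≤ d 2) := h 4
  have h5 : ¬ ((0:ℕ) ≤ d 0 ∧ (0:ℕ) ≤ d 1 ∧ (3:ℕ) ≤ d 2) := h 5
  set a := d 0 with ha
  set b := d 1 with hb
  set c := d 2 with hc
  clear_value a b c
  have hb2 : b ≤ 1 := by omega
  have ha2 : a ≤ 2 := by omega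
  have hc2 : c ≤ 2 := by omega
  simp only [m, E_eq]
  interval_cases a <;> interval_cases b <;> interval_cases c <;>
    first
      | decide
      | (exfalso; omega)

lemma std_m (k : Fin 11) : Std (m k) := by
  rw [m, Std_E]
  intro j
  revert k j
  decide



/-! ### Generators and the ideal -/

noncomputable def gv (j : Fin 6) : Rp := monomial (u j) 1

def genSet : Set Rp :=
  {X 0 ^ 3, X 1 ^ 2, X 0 ^ 2 * X 2, X 0 * X 2 ^ 2, X 1 * X 2 ^ 2, X 2 ^ 3}

lemma single_E0 (a : ℕ) : Finsupp.single (0 : Fin 3) a = E a 0 0 := by simp [E]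
lemma single_E1 (a : ℕ) : Finsupp.single (1 : Fin 3) a = E 0 a 0 := by simp [E]
lemma single_E2 (a : ℕ) : Finsupp.single (2 : Fin 3) a = E 0 0 a := by simp [E]

lemma X_pow_E0 (n : ℕ) : (X 0 ^ n : Rp) = monomial (E n 0 0) 1 := by
  rw [X_pow_eq_monomial, single_E0]
lemma X_pow_E1 (n : ℕ) : (X 1 ^ n : Rp) = monomial (E 0 n 0) 1 := by
  rw [X_pow_eq_monomial, single_E1]
lemma X_pow_E2 (n : ℕ) : (X 2 ^ n : Rp) = monomial (E 0 0 n) 1 := by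
  rw [X_pow_eq_monomial, single_E2]

lemma genSet_eq : genSet = Set.range gv := by
  have e0 : (X 0 ^ 3 : Rp) = gv 0 := by
    rw [X_pow_E0]; rfl
  have e1 : (X 1 ^ 2 : Rp) = gv 1 := by
    rw [X_pow_E1]; rfl
  have e2 : (X 0 ^ 2 * X 2 : Rp) = gv 2 := by
    rw [show (X 2 : Rp) = X 2 ^ 1 by ring, X_pow_E0, X_pow_E2, monomial_mul, E_add]
    norm_num; rfl
  have e3 : (X 0 * X 2 ^ 2 : Rp) = gv 3 := by
    rw [show (X 0 : Rp) = X 0 ^ 1 by ring, X_pow_E0, X_pow_E2, monomial_mul, E_add]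
    norm_num; rfl
  have e4 : (X 1 * X 2 ^ 2 : Rp) = gv 4 := by
    rw [show (X 1 : Rp) = X 1 ^ 1 by ring, X_pow_E1, X_pow_E2, monomial_mul, E_add]
    norm_num; rfl
  have e5 : (X 2 ^ 3 : Rp) = gv 5 := by
    rw [X_pow_E2]; rfl
  rw [genSet, e0, e1, e2, e3, e4, e5]
  apply Set.eq_of_subset_of_subset
  · intro x hx
    rcases hx with rfl | rfl | rfl | rfl | rfl | rfl
    exacts [⟨0, rfl⟩, ⟨1, rfl⟩, ⟨2, rfl⟩, ⟨3, rfl⟩, ⟨4, rfl⟩, ⟨5, rfl⟩]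
  · rintro x ⟨j, rfl⟩
    fin_cases j
    · exact Or.inl rfl
    · exact Or.inr (Or.inl rfl)
    · exact Or.inr (Or.inr (Or.inl rfl))
    · exact Or.inr (Or.inr (Or.inr (Or.inl rfl)))
    · exact Or.inr (Or.inr (Or.inr (Or.inr (Or.inl rfl))))
    · exact Or.inr (Or.inr (Or.inr (Or.inr (Or.inr rfl))))

section WithIdeal

variable {I : Ideal Rp} (hI : I = Ideal.span genSet)
include hI

lemma gv_mem (j : Fin 6) : gv j ∈ I := by
  rw [hI]
  exact Ideal.subset_span (by rw [genSet_eq]; exact ⟨j, rfl⟩)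

lemma mem_I_of_not_std {d : exps} (h : ¬ Std d) (c : ℂ) : monomial d c ∈ I := by
  rw [Std] at h
  push_neg at h
  obtain ⟨j, hj⟩ := h
  have : monomial d c = monomial (u j) 1 * monomial (d - u j) c := by
    rw [monomial_mul, one_mul, add_tsub_cancel_of_le hj]
  rw [this]
  exact Ideal.mul_mem_right _ _ (gv_mem hI j)

omit hI in
lemma std_anti {d d' : exps} (h : d' ≤ d) (hd : Std d) : Std d' :=
  fun j hj => hd j (hj.trans h)

lemma coeff_vanish {p : Rp} (hp : p ∈ I) : ∀ d, Std d → coeff d p = 0 := by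
  rw [hI, genSet_eq] at hp
  induction hp using Submodule.span_induction with
  | mem x hx =>
      obtain ⟨j, rfl⟩ := hx
      intro d hd
      rw [gv, coeff_monomial, if_neg]
      intro he
      exact (hd j) (le_of_eq he)
  | zero => simp
  | add x y _ _ hx hy =>
      intro d hd
      simp [coeff_add, hx d hd, hy d hd]
  | smul r x _ hx =>
      intro d hd
      rw [smul_eq_mul, coeff_mul]
      refine Finset.sum_eq_zero fun q hq => ?_
      rw [Finset.HasAntidiagonal.mem_antidiagonal] at hq
      have h2 : q.2 ≤ d := hq ▸ le_add_self
      rw [hx q.2 (std_anti h2 hd)]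
      ring

lemma mem_of_std_coeff_zero {p : Rp} (h : ∀ d, Std d → coeff d p = 0) : p ∈ I := by
  rw [as_sum p]
  refine Ideal.sum_mem _ fun v hv => ?_
  refine mem_I_of_not_std hI (fun hs => ?_) _
  exact (mem_support_iff.1 hv) (h v hs)


/-! ### The quotient module and its basis -/

noncomputable def cls (I : Ideal Rp) (d : exps) : Rp ⧸ I :=
  Ideal.Quotient.mk I (monomial d 1)

omit hI in
lemma smul_cls (e d : exps) :
    (monomial e 1 : Rp) • cls I d = cls I (e + d) := by
  rw [cls, cls, ← Ideal.Quotient.mk_eq_mk, ← Ideal.Quotient.mk_eq_mk,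
    ← Submodule.Quotient.mk_smul, smul_eq_mul, monomial_mul, one_mul]

omit hI in
lemma csmul_mk (c : ℂ) (x : Rp) :
    c • (Ideal.Quotient.mk I x) = Ideal.Quotient.mk I (c • x) := by
  rw [← Ideal.Quotient.mkₐ_eq_mk ℂ, ← map_smul]

lemma cls_eq_zero {d : exps} (h : ¬ Std d) : cls I d = 0 :=
  Ideal.Quotient.eq_zero_iff_mem.2 (mem_I_of_not_std hI h 1)

noncomputable def bv (I : Ideal Rp) (k : Fin 11) : Rp ⧸ I := cls I (m k)

lemma bv_indep : LinearIndependent ℂ (bv I) := by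
  rw [Fintype.linearIndependent_iff]
  intro g hg k
  have key : (∑ l, g l • bv I l) = Ideal.Quotient.mk I (∑ l, monomial (m l) (g l)) := by
    rw [map_sum]
    refine Finset.sum_congr rfl fun l _ => ?_
    rw [bv, cls, csmul_mk]
    congr 1
    rw [smul_monomial, smul_eq_mul, mul_one]
  rw [key] at hg
  have hmem : (∑ l, monomial (m l) (g l)) ∈ I := Ideal.Quotient.eq_zero_iff_mem.1 hg
  have hc := coeff_vanish hI hmem (m k) (std_m k)
  rw [coeff_sum] at hc
  rw [Finset.sum_eq_single k (fun l _ hl => by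
        rw [coeff_monomial, if_neg (fun he => hl (m_inj he))])
      (fun h => absurd (Finset.mem_univ k) h)] at hc
  rwa [coeff_monomial, if_pos rfl] at hc

lemma bv_span : ⊤ ≤ Submodule.span ℂ (Set.range (bv I)) := by
  rintro x -
  obtain ⟨p, rfl⟩ := Ideal.Quotient.mk_surjective x
  have key : Ideal.Quotient.mk I p = ∑ k, coeff (m k) p • bv I k := by
    have hd : p - ∑ k, monomial (m k) (coeff (m k) p) ∈ I := by
      refine mem_of_std_coeff_zero hI fun d hd => ?_
      obtain ⟨k, rfl⟩ := std_complete hd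
      rw [coeff_sub, coeff_sum, Finset.sum_eq_single k
        (fun l _ hl => by rw [coeff_monomial, if_neg (fun he => hl (m_inj he))])
        (fun h => absurd (Finset.mem_univ k) h), coeff_monomial, if_pos rfl, sub_self]
    have := (Ideal.Quotient.eq_zero_iff_mem (I := I)).2 hd
    rw [map_sub, sub_eq_zero] at this
    rw [this, map_sum]
    refine Finset.sum_congr rfl fun k _ => ?_
    rw [bv, cls, csmul_mk]
    congr 1
    rw [smul_monomial, smul_eq_mul, mul_one]
  rw [key]
  exact Submodule.sum_mem _ fun k _ =>
    Submodule.smul_mem _ _ (Submodule.subset_span ⟨k, rfl⟩)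

noncomputable def bB : Module.Basis (Fin 11) ℂ (Rp ⧸ I) := Module.Basis.mk (bv_indep hI) (bv_span hI)

lemma finrank_quot : Module.finrank ℂ (Rp ⧸ I) = 11 := by
  rw [Module.finrank_eq_card_basis (bB hI), Fintype.card_fin]

lemma bB_apply (k : Fin 11) : bB hI k = bv I k := by
  rw [bB]
  exact Module.Basis.mk_apply _ _ k

lemma repr_cls (d : exps) (l : Fin 11) :
    (bB hI).repr (cls I d) l = if d = m l then 1 else 0 := by
  by_cases hd : d = m l
  · rw [if_pos hd, hd]
    rw [show cls I (m l) = bB hI l from (bB_apply hI l).symm, Module.Basis.repr_self,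
      Finsupp.single_eq_same]
  · rw [if_neg hd]
    by_cases hs : Std d
    · obtain ⟨k, rfl⟩ := std_complete hs
      rw [show cls I (m k) = bB hI k from (bB_apply hI k).symm, Module.Basis.repr_self,
        Finsupp.single_eq_of_ne (fun he => hd (by rw [he]))]
    · rw [cls_eq_zero hI hs, LinearEquiv.map_zero, Finsupp.coe_zero, Pi.zero_apply]


/-! ### Coordinates of monomial shifts -/

omit hI in
lemma smul_comm_cq (r : Rp) (c : ℂ) (x : Rp ⧸ I) : r • c • x = c • r • x :=
  smul_comm r c x

lemma coord_smul (e : exps) (l : Fin 11) (w : Rp ⧸ I) :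
    (bB hI).repr ((monomial e 1 : Rp) • w) l
      = ∑ k, (if e + m k = m l then (bB hI).repr w k else 0) := by
  have h1 : (monomial e 1 : Rp) • w = ∑ k, (bB hI).repr w k • cls I (e + m k) := by
    conv_lhs => rw [← Module.Basis.sum_repr (bB hI) w]
    rw [Finset.smul_sum]
    refine Finset.sum_congr rfl fun k _ => ?_
    rw [smul_comm, bB_apply hI, bv, smul_cls]
  rw [← Module.Basis.coord_apply, h1, map_sum]
  refine Finset.sum_congr rfl fun k _ => ?_
  rw [map_smul, Module.Basis.coord_apply, repr_cls hI]
  by_cases h : e + m k = m l <;> simp [h]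

lemma coord_smul_single (e : exps) (l k : Fin 11) (hk : e + m k = m l) (w : Rp ⧸ I) :
    (bB hI).repr ((monomial e 1 : Rp) • w) l = (bB hI).repr w k := by
  rw [coord_smul hI]
  rw [Finset.sum_eq_single k
    (fun k' _ hk' => by
      rw [if_neg]
      intro he
      exact hk' (m_inj (add_left_cancel (he.trans hk.symm))))
    (fun h => absurd (Finset.mem_univ k) h)]
  rw [if_pos hk]

lemma coord_smul_zero (e : exps) (l : Fin 11) (h : ∀ k, e + m k ≠ m l) (w : Rp ⧸ I) :
    (bB hI).repr ((monomial e 1 : Rp) • w) l = 0 := by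
  rw [coord_smul hI]
  exact Finset.sum_eq_zero fun k _ => if_neg (h k)

/-! ### The compatibility predicate -/

def inW (I : Ideal Rp) (v : Fin 6 → Rp ⧸ I) : Prop :=
  ∀ i j (e e' : exps), e + u i = e' + u j →
    (monomial e 1 : Rp) • v i = (monomial e' 1 : Rp) • v j

lemma D1 {v : Fin 6 → Rp ⧸ I} (hv : inW I v) (i j : Fin 6) (e e' : exps)
    (h : e + u i = e' + u j) (k k' l : Fin 11)
    (hk : e + m k = m l) (hk' : e' + m k' = m l) :
    (bB hI).repr (v i) k = (bB hI).repr (v j) k' := by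
  have h2 := congrArg (fun x => (bB hI).repr x l) (hv i j e e' h)
  simpa [coord_smul_single hI e l k hk, coord_smul_single hI e' l k' hk'] using h2

lemma D2 {v : Fin 6 → Rp ⧸ I} (hv : inW I v) (i j : Fin 6) (e e' : exps)
    (h : e + u i = e' + u j) (k l : Fin 11)
    (hk : e + m k = m l) (hz : ∀ k', e' + m k' ≠ m l) :
    (bB hI).repr (v i) k = 0 := by
  have h2 := congrArg (fun x => (bB hI).repr x l) (hv i j e e' h)
  simpa [coord_smul_single hI e l k hk, coord_smul_zero hI e' l hz] using h2


/-! ### Evaluation of homs on the generators -/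

noncomputable def ev (φ : ↥I →ₗ[Rp] Rp ⧸ I) : Fin 6 → Rp ⧸ I :=
  fun j => φ ⟨gv j, gv_mem hI j⟩

lemma ev_inW (φ : ↥I →ₗ[Rp] Rp ⧸ I) : inW I (ev hI φ) := by
  intro i j e e' h
  rw [ev, ev, ← map_smul, ← map_smul]
  congr 1
  apply Subtype.ext
  show (monomial e 1 : Rp) • gv i = (monomial e' 1 : Rp) • gv j
  rw [smul_eq_mul, smul_eq_mul, gv, gv, monomial_mul, monomial_mul, one_mul, h]

lemma ev_zero (φ : ↥I →ₗ[Rp] Rp ⧸ I) (h : ∀ j, φ ⟨gv j, gv_mem hI j⟩ = 0) :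
    φ = 0 := by
  ext ⟨x, hx⟩
  have hx' : x ∈ Submodule.span Rp (Set.range gv) := by
    rw [← genSet_eq]; rw [hI] at hx; exact hx
  show φ ⟨x, hx⟩ = 0
  have main : ∀ y ∈ Submodule.span Rp (Set.range gv), ∀ hy : y ∈ I, φ ⟨y, hy⟩ = 0 := by
    intro y hy
    induction hy using Submodule.span_induction with
    | mem z hz =>
        obtain ⟨j, rfl⟩ := hz
        intro hy
        exact h j
    | zero =>
        intro hy
        exact map_zero φ
    | add z w hz hw ihz ihw =>
        intro hy
        have hzI : z ∈ I := by rw [hI, genSet_eq]; exact hz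
        have hwI : w ∈ I := by rw [hI, genSet_eq]; exact hw
        have : (⟨z + w, hy⟩ : ↥I) = ⟨z, hzI⟩ + ⟨w, hwI⟩ := rfl
        rw [this, map_add, ihz hzI, ihw hwI, add_zero]
    | smul r z hz ihz =>
        intro hy
        have hzI : z ∈ I := by rw [hI, genSet_eq]; exact hz
        have : (⟨r • z, hy⟩ : ↥I) = r • ⟨z, hzI⟩ := rfl
        rw [this, map_smul, ihz hzI, smul_zero]
  exact main x hx' hx

/-! ### Constructing a hom from a compatible tuple -/

noncomputable def Ffun (I : Ideal Rp) (v : Fin 6 → Rp ⧸ I) : exps → Rp ⧸ I := fun d =>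
  if h : ∃ j, u j ≤ d then (monomial (d - u h.choose) 1 : Rp) • v h.choose else 0

omit hI in
lemma Ffun_spec {v : Fin 6 → Rp ⧸ I} (hv : inW I v) {d : exps} {j : Fin 6}
    (hj : u j ≤ d) : Ffun I v d = (monomial (d - u j) 1 : Rp) • v j := by
  have hex : ∃ j, u j ≤ d := ⟨j, hj⟩
  rw [Ffun, dif_pos hex]
  exact hv hex.choose j _ _ (by
    rw [tsub_add_cancel_of_le hex.choose_spec, tsub_add_cancel_of_le hj])

noncomputable def T (I : Ideal Rp) (v : Fin 6 → Rp ⧸ I) : Rp →ₗ[ℂ] Rp ⧸ I :=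
  (MvPolynomial.basisMonomials (Fin 3) ℂ).constr ℂ (Ffun I v)

omit hI in
lemma T_monomial (v : Fin 6 → Rp ⧸ I) (d : exps) (c : ℂ) :
    T I v (monomial d c) = c • Ffun I v d := by
  have h1 : (monomial d c : Rp) = c • monomial d 1 := by
    rw [smul_monomial, smul_eq_mul, mul_one]
  rw [h1, map_smul, T]
  congr 1
  have h2 : (monomial d 1 : Rp) = (MvPolynomial.basisMonomials (Fin 3) ℂ) d := by
    rw [coe_basisMonomials]
  rw [h2]
  exact Module.Basis.constr_basis _ _ _ _

omit hI in
lemma T_shift {v : Fin 6 → Rp ⧸ I} (hv : inW I v) (a d : exps) (hd : ¬ Std d) (c : ℂ) :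
    T I v (monomial a 1 * monomial d c) = (monomial a 1 : Rp) • T I v (monomial d c) := by
  obtain ⟨j, hj⟩ : ∃ j, u j ≤ d := by
    rw [Std] at hd; push_neg at hd; exact hd
  have hj2 : u j ≤ a + d := hj.trans (le_add_self)
  rw [monomial_mul, one_mul, T_monomial, T_monomial,
    Ffun_spec hv hj, Ffun_spec hv hj2]
  rw [smul_comm ((monomial a 1 : Rp)) c, smul_smul, monomial_mul, one_mul]
  congr 2
  rw [add_tsub_assoc_of_le hj]

omit hI in
lemma T_mul_monomial {v : Fin 6 → Rp ⧸ I} (hv : inW I v) (q : Rp) (d : exps)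
    (hd : ¬ Std d) (c : ℂ) :
    T I v (q * monomial d c) = q • T I v (monomial d c) := by
  induction q using MvPolynomial.induction_on' with
  | monomial a r =>
      have h1 : (monomial a r : Rp) = r • monomial a 1 := by
        rw [smul_monomial, smul_eq_mul, mul_one]
      rw [h1, smul_mul_assoc, map_smul, T_shift hv a d hd c, smul_assoc]
  | add p q hp hq =>
      rw [add_mul, map_add, hp, hq, add_smul]

lemma T_mul {v : Fin 6 → Rp ⧸ I} (hv : inW I v) (q p : Rp) (hp : p ∈ I) :
    T I v (q * p) = q • T I v p := by
  have hcv := coeff_vanish hI hp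
  conv_lhs => rw [as_sum p]
  conv_rhs => rw [as_sum p]
  rw [Finset.mul_sum, map_sum, map_sum, Finset.smul_sum]
  refine Finset.sum_congr rfl fun d hd => ?_
  refine T_mul_monomial hv q d (fun hs => ?_) _
  exact (mem_support_iff.1 hd) (hcv d hs)

noncomputable def homOf (v : Fin 6 → Rp ⧸ I) (hv : inW I v) :
    ↥I →ₗ[Rp] Rp ⧸ I where
  toFun x := T I v (x : Rp)
  map_add' x y := by
    show T I v ((x : Rp) + (y : Rp)) = T I v (x : Rp) + T I v (y : Rp)
    rw [map_add]
  map_smul' r x := by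
    simp only [RingHom.id_apply]
    rw [show ((r • x : ↥I) : Rp) = r * (x : Rp) from rfl]
    exact T_mul hI hv r (x : Rp) x.2

lemma ev_homOf (v : Fin 6 → Rp ⧸ I) (hv : inW I v) :
    ev hI (homOf hI v hv) = v := by
  funext j
  show T I v (gv j) = v j
  rw [gv, show (1 : ℂ) = (1 : ℂ) from rfl]
  rw [show (monomial (u j) (1:ℂ) : Rp) = monomial (u j) ((1:ℂ)) from rfl]
  rw [T_monomial, Ffun_spec hv (le_refl (u j)), tsub_self, one_smul]
  have : (monomial (0 : exps) 1 : Rp) = 1 := by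
    rw [monomial_zero']
    exact C_1
  rw [this, one_smul]


end WithIdeal

/-! ### The 33 basis classes -/

def PA : Fin 33 → ℕ := ![0,0,0,0,0,0,0,0,0,0,0,1,1,1,1,2,2,0,0,0,0,0,0,0,0,1,1,0,1,2,0,1,2]
def PB : Fin 33 → ℕ := ![0,1,0,1,1,0,1,0,0,0,0,0,0,0,0,0,0,0,0,1,0,1,0,0,1,0,1,0,0,0,0,1,1]
def PC : Fin 33 → ℕ := ![2,1,1,0,1,0,0,1,2,0,1,0,1,0,1,0,0,1,0,0,0,0,0,0,0,0,0,0,0,0,0,0,0]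
def NtA : Fin 33 → ℕ := ![3,3,2,2,2,1,1,0,0,0,0,0,0,0,0,0,0,2,1,1,0,0,1,0,0,0,0,0,0,0,0,0,0]
def NtB : Fin 33 → ℕ := ![0,0,0,0,0,0,0,2,2,1,1,2,2,1,1,2,1,0,0,0,0,0,0,0,0,0,0,1,0,0,0,0,0]
def NtC : Fin 33 → ℕ := ![0,0,0,0,0,0,0,0,0,0,0,0,0,0,0,0,0,0,0,0,1,1,0,1,1,2,2,0,1,2,1,2,3]
def Av : Fin 33 → Fin 6 → Bool := ![![true,false,false,false,false,false],![true,false,false,false,false,false],![true,false,false,false,false,false],![true,false,true,false,false,false],![true,false,false,false,false,false],![true,false,false,false,false,false],![true,false,false,false,false,false],![false,true,false,false,false,false],![false,true,false,false,false,false],![false,true,false,false,false,false],![false,true,false,false,false,false],![false,true,false,false,false,false],![false,true,false,false,false,false],![false,true,false,false,false,false],![false,true,false,false,false,false],![false,true,false,false,false,false],![false,true,false,false,false,false],![false,false,true,false,false,false],![false,false,true,false,false,false],![false,false,true,false,false,false],![false,false,true,false,false,false],![false,false,true,false,false,false],![false,false,false,true,false,false],![false,false,false,true,true,false],![false,fa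lse,false,true,false,false],![false,false,false,true,true,true],![false,false,false,true,false,false],![false,false,false,false,true,false],![false,false,false,false,true,false],![false,false,false,false,true,false],![false,false,false,false,false,true],![false,false,false,false,false,true],![false,false,false,false,false,true]]
def jp : Fin 33 → Fin 6 := ![0,0,0,0,0,0,0,1,1,1,1,1,1,1,1,1,1,2,2,2,2,2,3,3,3,3,3,4,4,4,5,5,5]
def kp : Fin 33 → Fin 11 := ![2,4,6,7,8,9,10,1,2,3,4,5,6,7,8,9,10,2,6,8,9,10,2,6,8,9,10,2,8,10,2,8,10]

noncomputable def Pt (t : Fin 33) : exps := E (PA t) (PB t) (PC t)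
noncomputable def Nt (t : Fin 33) : exps := E (NtA t) (NtB t) (NtC t)

/-! ### Numeric helper lemmas -/

lemma euu {a b c a' b' c' : ℕ} {i j : Fin 6}
    (h : a + uA i = a' + uA j ∧ b + uB i = b' + uB j ∧ c + uC i = c' + uC j) :
    E a b c + u i = E a' b' c' + u j := by
  rw [u, u, E_add, E_add, E_eq]
  exact h

lemma emm {a b c : ℕ} {k l : Fin 11}
    (h : a + mA k = mA l ∧ b + mB k = mB l ∧ c + mC k = mC l) :
    E a b c + m k = m l := by
  rw [m, m, E_add, E_eq]
  exact h

lemma emm_ne {a b c : ℕ} {l : Fin 11}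
    (h : ∀ k' : Fin 11, ¬ (a + mA k' = mA l ∧ b + mB k' = mB l ∧ c + mC k' = mC l)) :
    ∀ k', E a b c + m k' ≠ m l := by
  intro k' he
  rw [m, m, E_add, E_eq] at he
  exact h k' he

section WithIdeal2

variable {I : Ideal Rp} (hI : I = Ideal.span genSet)
include hI

/-! ### Membership of the class vectors in `inW` -/

lemma Wmem (P N : exps) (A : Fin 6 → Bool)
    (hA : ∀ j, A j = true → N ≤ u j + P)
    (hZ : ∀ i j, A i = true → A j = false → ∃ s : Fin 6, u s + N ≤ u i ⊔ u j + P) :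
    inW I (fun j => if A j = true then cls I (u j + P - N) else 0) := by
  intro i j e e' h
  have hax : ∀ x : Fin 3, e x + u i x = e' x + u j x := by
    intro x
    have := congrArg (fun f : exps => f x) h
    simpa [Finsupp.add_apply] using this
  by_cases hi : A i = true
  · by_cases hj : A j = true
    · simp only [if_pos hi, if_pos hj]
      rw [smul_cls, smul_cls]
      congr 1
      rw [← add_tsub_assoc_of_le (hA i hi), ← add_tsub_assoc_of_le (hA j hj),
        ← add_assoc, ← add_assoc, h]
    · simp only [if_pos hi, if_neg hj]
      rw [smul_zero, smul_cls, ← add_tsub_assoc_of_le (hA i hi), ← add_assoc]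
      apply cls_eq_zero hI
      intro hstd
      obtain ⟨s, hs⟩ := hZ i j hi (by simpa using hj)
      apply hstd s
      rw [Finsupp.le_def]
      intro x
      rw [Finsupp.tsub_apply, Finsupp.add_apply, Finsupp.add_apply]
      have h1 := Finsupp.le_def.mp hs x
      rw [Finsupp.add_apply, Finsupp.add_apply, Finsupp.sup_apply] at h1
      have h3 : u i x ⊔ u j x ≤ e x + u i x :=
        sup_le (Nat.le_add_left _ _) (by rw [hax x]; exact Nat.le_add_left _ _)
      have h4 := h1.trans (add_le_add_left h3 (P x))
      omega
  · by_cases hj : A j = true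
    · simp only [if_neg hi, if_pos hj]
      rw [smul_zero, smul_cls, ← add_tsub_assoc_of_le (hA j hj), ← add_assoc]
      symm
      apply cls_eq_zero hI
      intro hstd
      obtain ⟨s, hs⟩ := hZ j i hj (by simpa using hi)
      apply hstd s
      rw [Finsupp.le_def]
      intro x
      rw [Finsupp.tsub_apply, Finsupp.add_apply, Finsupp.add_apply]
      have h1 := Finsupp.le_def.mp hs x
      rw [Finsupp.add_apply, Finsupp.add_apply, Finsupp.sup_apply] at h1
      have h3 : u j x ⊔ u i x ≤ e' x + u j x :=
        sup_le (Nat.le_add_left _ _) (by rw [← hax x]; exact Nat.le_add_left _ _)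
      have h4 := h1.trans (add_le_add_left h3 (P x))
      omega
    · simp only [if_neg hi, if_neg hj, smul_zero]

omit hI in
lemma hA_num : ∀ t (j : Fin 6), Av t j = true →
    NtA t ≤ uA j + PA t ∧ NtB t ≤ uB j + PB t ∧ NtC t ≤ uC j + PC t := by decide

omit hI in
lemma hZ_num : ∀ t (i j : Fin 6), Av t i = true → Av t j = false →
    ∃ s : Fin 6, uA s + NtA t ≤ max (uA i) (uA j) + PA t ∧
      uB s + NtB t ≤ max (uB i) (uB j) + PB t ∧
      uC s + NtC t ≤ max (uC i) (uC j) + PC t := by decide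

noncomputable def wv (I : Ideal Rp) (t : Fin 33) : Fin 6 → Rp ⧸ I :=
  fun j => if Av t j = true then cls I (u j + Pt t - Nt t) else 0

lemma wv_mem (t : Fin 33) : inW I (wv I t) := by
  refine Wmem hI (Pt t) (Nt t) (Av t) ?_ ?_
  · intro j hj
    rw [u, Pt, Nt, E_add, E_le]
    exact hA_num t j hj
  · intro i j hi hj
    obtain ⟨s, hs⟩ := hZ_num t i j hi hj
    refine ⟨s, ?_⟩
    rw [u, u, u, Pt, Nt, E_sup, E_add, E_add, E_le]
    exact hs

omit hI in
lemma pivot_fact : ∀ t : Fin 33, Av t (jp t) = true ∧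
    uA (jp t) + PA t - NtA t = mA (kp t) ∧
    uB (jp t) + PB t - NtB t = mB (kp t) ∧
    uC (jp t) + PC t - NtC t = mC (kp t) := by decide

omit hI in
lemma pivot_uniq : ∀ s t : Fin 33, (Av s (jp t) = true ∧
    uA (jp t) + PA s - NtA s = mA (kp t) ∧
    uB (jp t) + PB s - NtB s = mB (kp t) ∧
    uC (jp t) + PC s - NtC s = mC (kp t)) → s = t := by decide

lemma wv_repr (t : Fin 33) (j : Fin 6) (k : Fin 11) :
    (bB hI).repr (wv I t j) k =
      if Av t j = true ∧ uA j + PA t - NtA t = mA k ∧ uB j + PB t - NtB t = mB k ∧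
          uC j + PC t - NtC t = mC k then 1 else 0 := by
  rw [wv]
  by_cases hA : Av t j = true
  · rw [if_pos hA, repr_cls hI]
    refine if_congr ?_ rfl rfl
    rw [show u j + Pt t - Nt t
        = E (uA j + PA t - NtA t) (uB j + PB t - NtB t) (uC j + PC t - NtC t) by
      rw [u, Pt, Nt, E_add, E_tsub]]
    rw [show m k = E (mA k) (mB k) (mC k) from rfl, E_eq]
    simp [hA]
  · rw [if_neg hA, if_neg (fun hc => hA hc.1), LinearEquiv.map_zero,
      Finsupp.coe_zero, Pi.zero_apply]

lemma pivot_delta (s t : Fin 33) :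
    (bB hI).repr (wv I s (jp t)) (kp t) = if s = t then 1 else 0 := by
  rw [wv_repr hI]
  refine if_congr ?_ rfl rfl
  constructor
  · exact pivot_uniq s t
  · rintro rfl
    exact pivot_fact _

/-! ### All coordinates vanish if the pivots do -/

lemma Zlem {v : Fin 6 → Rp ⧸ I} (hv : inW I v)
    (hp : ∀ t : Fin 33, (bB hI).repr (v (jp t)) (kp t) = 0) : v = 0 := by
  have h_0_0 : (bB hI).repr (v 0) 0 = 0 := D2 hI hv 0 2 (E 0 0 1) (E 1 0 0) (euu (by decide)) 0 1 (emm (by decide)) (emm_ne (by decide))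
  have h_0_1 : (bB hI).repr (v 0) 1 = 0 := D2 hI hv 0 2 (E 0 0 1) (E 1 0 0) (euu (by decide)) 1 2 (emm (by decide)) (emm_ne (by decide))
  have h_0_3 : (bB hI).repr (v 0) 3 = 0 := D2 hI hv 0 2 (E 0 0 1) (E 1 0 0) (euu (by decide)) 3 4 (emm (by decide)) (emm_ne (by decide))
  have h_2_1 : (bB hI).repr (v 2) 1 = 0 := D2 hI hv 2 3 (E 0 0 1) (E 1 0 0) (euu (by decide)) 1 2 (emm (by decide)) (emm_ne (by decide))
  have h_1_0 : (bB hI).repr (v 1) 0 = 0 := D2 hI hv 1 4 (E 0 0 2) (E 0 1 0) (euu (by decide)) 0 2 (emm (by decide)) (emm_ne (by decide))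
  have h_2_0 : (bB hI).repr (v 2) 0 = 0 := D2 hI hv 2 0 (E 1 0 0) (E 0 0 1) (euu (by decide)) 0 5 (emm (by decide)) (emm_ne (by decide))
  have h_2_3 : (bB hI).repr (v 2) 3 = 0 := D2 hI hv 2 0 (E 1 0 0) (E 0 0 1) (euu (by decide)) 3 7 (emm (by decide)) (emm_ne (by decide))
  have h_2_5 : (bB hI).repr (v 2) 5 = 0 := D2 hI hv 2 0 (E 1 0 0) (E 0 0 1) (euu (by decide)) 5 9 (emm (by decide)) (emm_ne (by decide))
  have h_3_1 : (bB hI).repr (v 3) 1 = 0 := D2 hI hv 3 4 (E 0 1 0) (E 1 0 0) (euu (by decide)) 1 4 (emm (by decide)) (emm_ne (by decide))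
  have h_2_7 : (bB hI).repr (v 2) 7 = 0 := D2 hI hv 2 0 (E 1 0 0) (E 0 0 1) (euu (by decide)) 7 10 (emm (by decide)) (emm_ne (by decide))
  have h_3_0 : (bB hI).repr (v 3) 0 = 0 := D2 hI hv 3 0 (E 2 0 0) (E 0 0 2) (euu (by decide)) 0 9 (emm (by decide)) (emm_ne (by decide))
  have h_3_3 : (bB hI).repr (v 3) 3 = 0 := D2 hI hv 3 0 (E 2 0 0) (E 0 0 2) (euu (by decide)) 3 10 (emm (by decide)) (emm_ne (by decide))
  have h_3_5 : (bB hI).repr (v 3) 5 = 0 := D2 hI hv 3 2 (E 1 0 0) (E 0 0 1) (euu (by decide)) 5 9 (emm (by decide)) (emm_ne (by decide))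
  have h_4_3 : (bB hI).repr (v 4) 3 = 0 := D2 hI hv 4 2 (E 2 0 0) (E 0 1 1) (euu (by decide)) 3 10 (emm (by decide)) (emm_ne (by decide))
  have h_3_7 : (bB hI).repr (v 3) 7 = 0 := D2 hI hv 3 2 (E 1 0 0) (E 0 0 1) (euu (by decide)) 7 10 (emm (by decide)) (emm_ne (by decide))
  have h_4_0 : (bB hI).repr (v 4) 0 = 0 := D2 hI hv 4 1 (E 0 1 0) (E 0 0 2) (euu (by decide)) 0 3 (emm (by decide)) (emm_ne (by decide))
  have h_4_1 : (bB hI).repr (v 4) 1 = 0 := D2 hI hv 4 1 (E 0 1 0) (E 0 0 2) (euu (by decide)) 1 4 (emm (by decide)) (emm_ne (by decide))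
  have h_4_5 : (bB hI).repr (v 4) 5 = 0 := D2 hI hv 4 1 (E 0 1 0) (E 0 0 2) (euu (by decide)) 5 7 (emm (by decide)) (emm_ne (by decide))
  have h_4_6 : (bB hI).repr (v 4) 6 = 0 := D2 hI hv 4 1 (E 0 1 0) (E 0 0 2) (euu (by decide)) 6 8 (emm (by decide)) (emm_ne (by decide))
  have h_4_9 : (bB hI).repr (v 4) 9 = 0 := D2 hI hv 4 1 (E 0 1 0) (E 0 0 2) (euu (by decide)) 9 10 (emm (by decide)) (emm_ne (by decide))
  have h_5_0 : (bB hI).repr (v 5) 0 = 0 := D2 hI hv 5 2 (E 2 0 0) (E 0 0 2) (euu (by decide)) 0 9 (emm (by decide)) (emm_ne (by decide))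
  have h_5_3 : (bB hI).repr (v 5) 3 = 0 := D2 hI hv 5 2 (E 2 0 0) (E 0 0 2) (euu (by decide)) 3 10 (emm (by decide)) (emm_ne (by decide))
  have h_5_5 : (bB hI).repr (v 5) 5 = 0 := D2 hI hv 5 3 (E 1 0 0) (E 0 0 1) (euu (by decide)) 5 9 (emm (by decide)) (emm_ne (by decide))
  have h_5_7 : (bB hI).repr (v 5) 7 = 0 := D2 hI hv 5 3 (E 1 0 0) (E 0 0 1) (euu (by decide)) 7 10 (emm (by decide)) (emm_ne (by decide))
  have h_5_9 : (bB hI).repr (v 5) 9 = 0 := D2 hI hv 5 4 (E 0 1 0) (E 0 0 1) (euu (by decide)) 9 10 (emm (by decide)) (emm_ne (by decide))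
  have h_0_5 : (bB hI).repr (v 0) 5 = 0 := ((D1 hI hv 0 2 (E 0 0 1) (E 1 0 0) (euu (by decide)) 5 1 6 (emm (by decide)) (emm (by decide)))).trans h_2_1
  have h_3_4 : (bB hI).repr (v 3) 4 = 0 := ((D1 hI hv 2 3 (E 0 0 1) (E 1 0 0) (euu (by decide)) 7 4 8 (emm (by decide)) (emm (by decide)))).symm.trans h_2_7
  have h_5_1 : (bB hI).repr (v 5) 1 = 0 := ((D1 hI hv 3 5 (E 0 0 1) (E 1 0 0) (euu (by decide)) 5 1 6 (emm (by decide)) (emm (by decide)))).symm.trans h_3_5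
  have h_5_4 : (bB hI).repr (v 5) 4 = 0 := ((D1 hI hv 3 5 (E 0 0 1) (E 1 0 0) (euu (by decide)) 7 4 8 (emm (by decide)) (emm (by decide)))).symm.trans h_3_7
  have h_0_2 : (bB hI).repr (v 0) 2 = 0 := hp 0
  have h_0_4 : (bB hI).repr (v 0) 4 = 0 := hp 1
  have h_0_6 : (bB hI).repr (v 0) 6 = 0 := hp 2
  have h_0_7 : (bB hI).repr (v 0) 7 = 0 := hp 3
  have h_0_8 : (bB hI).repr (v 0) 8 = 0 := hp 4
  have h_0_9 : (bB hI).repr (v 0) 9 = 0 := hp 5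
  have h_0_10 : (bB hI).repr (v 0) 10 = 0 := hp 6
  have h_1_1 : (bB hI).repr (v 1) 1 = 0 := hp 7
  have h_1_2 : (bB hI).repr (v 1) 2 = 0 := hp 8
  have h_1_3 : (bB hI).repr (v 1) 3 = 0 := hp 9
  have h_1_4 : (bB hI).repr (v 1) 4 = 0 := hp 10
  have h_1_5 : (bB hI).repr (v 1) 5 = 0 := hp 11
  have h_1_6 : (bB hI).repr (v 1) 6 = 0 := hp 12
  have h_1_7 : (bB hI).repr (v 1) 7 = 0 := hp 13
  have h_1_8 : (bB hI).repr (v 1) 8 = 0 := hp 14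
  have h_1_9 : (bB hI).repr (v 1) 9 = 0 := hp 15
  have h_1_10 : (bB hI).repr (v 1) 10 = 0 := hp 16
  have h_2_2 : (bB hI).repr (v 2) 2 = 0 := hp 17
  have h_2_6 : (bB hI).repr (v 2) 6 = 0 := hp 18
  have h_2_8 : (bB hI).repr (v 2) 8 = 0 := hp 19
  have h_2_9 : (bB hI).repr (v 2) 9 = 0 := hp 20
  have h_2_10 : (bB hI).repr (v 2) 10 = 0 := hp 21
  have h_3_2 : (bB hI).repr (v 3) 2 = 0 := hp 22
  have h_3_6 : (bB hI).repr (v 3) 6 = 0 := hp 23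
  have h_3_8 : (bB hI).repr (v 3) 8 = 0 := hp 24
  have h_3_9 : (bB hI).repr (v 3) 9 = 0 := hp 25
  have h_3_10 : (bB hI).repr (v 3) 10 = 0 := hp 26
  have h_4_2 : (bB hI).repr (v 4) 2 = 0 := hp 27
  have h_4_8 : (bB hI).repr (v 4) 8 = 0 := hp 28
  have h_4_10 : (bB hI).repr (v 4) 10 = 0 := hp 29
  have h_5_2 : (bB hI).repr (v 5) 2 = 0 := hp 30
  have h_5_8 : (bB hI).repr (v 5) 8 = 0 := hp 31
  have h_5_10 : (bB hI).repr (v 5) 10 = 0 := hp 32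
  have h_2_4 : (bB hI).repr (v 2) 4 = 0 := ((D1 hI hv 0 2 (E 0 0 1) (E 1 0 0) (euu (by decide)) 7 4 8 (emm (by decide)) (emm (by decide)))).symm.trans h_0_7
  have h_4_4 : (bB hI).repr (v 4) 4 = 0 := ((D1 hI hv 3 4 (E 0 1 0) (E 1 0 0) (euu (by decide)) 6 4 8 (emm (by decide)) (emm (by decide)))).symm.trans h_3_6
  have h_4_7 : (bB hI).repr (v 4) 7 = 0 := ((D1 hI hv 3 4 (E 0 1 0) (E 1 0 0) (euu (by decide)) 9 7 10 (emm (by decide)) (emm (by decide)))).symm.trans h_3_9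
  have h_5_6 : (bB hI).repr (v 5) 6 = 0 := ((D1 hI hv 4 5 (E 0 0 1) (E 0 1 0) (euu (by decide)) 7 6 8 (emm (by decide)) (emm (by decide)))).symm.trans h_4_7
  have hall : ∀ (j : Fin 6) (k : Fin 11), (bB hI).repr (v j) k = 0 := by
    intro j k
    fin_cases j <;> fin_cases k <;> assumption
  funext j
  refine (bB hI).ext_elem fun k => ?_
  rw [hall j k, Pi.zero_apply, LinearEquiv.map_zero, Finsupp.coe_zero, Pi.zero_apply]

/-! ### The basis of the Hom module -/

noncomputable def hB (t : Fin 33) : ↥I →ₗ[Rp] Rp ⧸ I :=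
  homOf hI (wv I t) (wv_mem hI t)

lemma hB_apply_gv (t : Fin 33) (j : Fin 6) :
    hB hI t ⟨gv j, gv_mem hI j⟩ = wv I t j :=
  congrFun (ev_homOf hI (wv I t) (wv_mem hI t)) j

lemma hB_indep : LinearIndependent ℂ (hB hI) := by
  rw [Fintype.linearIndependent_iff]
  intro g hg t
  have h2 : (0 : Rp ⧸ I) = ∑ s, g s • wv I s (jp t) := by
    have h1 := congrArg
      (fun ψ : ↥I →ₗ[Rp] Rp ⧸ I => ψ ⟨gv (jp t), gv_mem hI (jp t)⟩) hg
    simp only [LinearMap.zero_apply] at h1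
    rw [← h1, LinearMap.sum_apply]
    refine Finset.sum_congr rfl fun s _ => ?_
    rw [LinearMap.smul_apply, hB_apply_gv hI]
  have h3 := congrArg (fun x => (bB hI).coord (kp t) x) h2
  simp only [map_zero, map_sum, map_smul] at h3
  rw [Finset.sum_congr rfl (fun s _ => by
    rw [Module.Basis.coord_apply, pivot_delta hI, smul_eq_mul, mul_ite, mul_one, mul_zero])] at h3
  rw [Finset.sum_ite_eq' Finset.univ t g, if_pos (Finset.mem_univ t)] at h3
  exact h3.symm

lemma hB_span : ⊤ ≤ Submodule.span ℂ (Set.range (hB hI)) := by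
  rintro φ -
  set g : Fin 33 → ℂ :=
    fun t => (bB hI).repr (ev hI φ (jp t)) (kp t) with hgdef
  have hev : ∀ j, ev hI (φ - ∑ t, g t • hB hI t) j
      = ev hI φ j - ∑ t, g t • wv I t j := by
    intro j
    show (φ - ∑ t, g t • hB hI t) ⟨gv j, gv_mem hI j⟩ = _
    rw [LinearMap.sub_apply, LinearMap.sum_apply]
    congr 1
    refine Finset.sum_congr rfl fun s _ => ?_
    rw [LinearMap.smul_apply, hB_apply_gv hI]
  have hz : ev hI (φ - ∑ t, g t • hB hI t) = 0 := by
    refine Zlem hI (ev_inW hI _) fun t => ?_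
    rw [hev (jp t), ← Module.Basis.coord_apply, map_sub, map_sum]
    rw [Finset.sum_congr rfl (fun s _ => by
      rw [map_smul, Module.Basis.coord_apply, pivot_delta hI, smul_eq_mul, mul_ite, mul_one,
        mul_zero])]
    rw [Finset.sum_ite_eq' Finset.univ t g, if_pos (Finset.mem_univ t),
      Module.Basis.coord_apply, sub_self]
  have hzero : φ - ∑ t, g t • hB hI t = 0 := by
    refine ev_zero hI _ fun j => ?_
    have := congrFun hz j
    exact this
  have hφ : φ = ∑ t, g t • hB hI t := by rwa [sub_eq_zero] at hzero
  rw [hφ]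
  exact Submodule.sum_mem _ fun t _ =>
    Submodule.smul_mem _ _ (Submodule.subset_span ⟨t, rfl⟩)

noncomputable def bH : Module.Basis (Fin 33) ℂ (↥I →ₗ[Rp] Rp ⧸ I) :=
  Module.Basis.mk (hB_indep hI) (hB_span hI)

lemma finrank_hom : Module.finrank ℂ (↥I →ₗ[Rp] Rp ⧸ I) = 33 := by
  rw [Module.finrank_eq_card_basis (bH hI), Fintype.card_fin]

end WithIdeal2

end NSE

/-- For `I = (x³, y², x²z, xz², yz², z³) ⊆ ℂ[x,y,z]` we have `dim ℂ R/I = 11` and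
`dim ℂ Hom_R(I, R/I) = 33`. -/
theorem nonsingular_example :
    ∀ I : Ideal (MvPolynomial (Fin 3) ℂ),
      I = Ideal.span {X 0 ^ 3, X 1 ^ 2, X 0 ^ 2 * X 2, X 0 * X 2 ^ 2, X 1 * X 2 ^ 2, X 2 ^ 3} →
      Module.finrank ℂ (MvPolynomial (Fin 3) ℂ ⧸ I) = 11 ∧
      Module.finrank ℂ (↥I →ₗ[MvPolynomial (Fin 3) ℂ] (MvPolynomial (Fin 3) ℂ ⧸ I)) = 33 := by
  intro I hI
  have hI' : I = Ideal.span NSE.genSet := hI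
  exact ⟨NSE.finrank_quot hI', NSE.finrank_hom hI'⟩
end

section
/- Let $R = \mathbb{C}[x,y]$, $J = (x,y)$ and $I = (x^3, x^2y, xy^2, y^3)$, so $I \subset J$, $\dim R/I = 6$, $\dim R/J = 1$. With $\psi: \operatorname{Hom}_R(I,R/I) \to \operatorname{Hom}_R(I,R/J)$ and $\phi: \operatorname{Hom}_R(J,R/J) \to \operatorname{Hom}_R(I,R/J)$ the natural induced maps, the dimension of $\operatorname{Ker}(\psi-\phi) \subset \operatorname{Hom}_R(I,R/I)\oplus\operatorname{Hom}_R(J,R/J)$ is not equal to $2 \cdot 6 = 12$. -/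
variable (k : Type*) {R : Type*} [Field k] [CommRing R] [Algebra k R]

/-- The map `Hom_R(I, R/I) → Hom_R(I, R/J)` induced by the projection `R/I → R/J`. -/
noncomputable def psiMap (I J : Ideal R) (h : I ≤ J) :
    (↥I →ₗ[R] R ⧸ I) →ₗ[k] (↥I →ₗ[R] R ⧸ J) where
  toFun f := (Submodule.mapQ I J LinearMap.id fun _ hx => h hx).comp f
  map_add' f g := by simp [LinearMap.comp_add]
  map_smul' c f := by ext x; simp

/-- The map `Hom_R(J, R/J) → Hom_R(I, R/J)` induced by the inclusion `I ⊆ J`. -/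
noncomputable def phiMap (I J : Ideal R) (h : I ≤ J) :
    (↥J →ₗ[R] R ⧸ J) →ₗ[k] (↥I →ₗ[R] R ⧸ J) where
  toFun g := g.comp (Submodule.inclusion h)
  map_add' f g := by ext x; simp
  map_smul' c f := by ext x; simp

/-- The map `(f₁, f₂) ↦ ψ f₁ - φ f₂` on `Hom_R(I,R/I) ⊕ Hom_R(J,R/J)`. -/
noncomputable def psiMinusPhi (I J : Ideal R) (h : I ≤ J) :
    ((↥I →ₗ[R] R ⧸ I) × (↥J →ₗ[R] R ⧸ J)) →ₗ[k] (↥I →ₗ[R] R ⧸ J) :=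
  (psiMap k I J h).comp (LinearMap.fst k _ _) - (phiMap k I J h).comp (LinearMap.snd k _ _)

open MvPolynomial

set_option maxHeartbeats 1000000
set_option synthInstance.maxHeartbeats 400000

noncomputable section NestedAux

abbrev Rp := MvPolynomial (Fin 2) ℂ
abbrev Iex : Ideal Rp := Ideal.span {X 0 ^ 3, X 0 ^ 2 * X 1, X 0 * X 1 ^ 2, X 1 ^ 3}
abbrev Jex : Ideal Rp := Ideal.span {X 0, X 1}


/-- all coefficients in degree < n vanish -/
def degGE (n : ℕ) (a : Rp) : Prop := ∀ d : Fin 2 →₀ ℕ, d 0 + d 1 < n → coeff d a = 0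

lemma degGE.mono {m n : ℕ} (h : m ≤ n) {a : Rp} (ha : degGE n a) : degGE m a :=
  fun d hd => ha d (lt_of_lt_of_le hd h)

lemma degGE_zero (n : ℕ) : degGE n (0 : Rp) := fun d _ => by simp

lemma degGE_any (a : Rp) : degGE 0 a := fun d hd => by omega

lemma degGE.add {n : ℕ} {a b : Rp} (ha : degGE n a) (hb : degGE n b) : degGE n (a + b) :=
  fun d hd => by simp [coeff_add, ha d hd, hb d hd]

lemma degGE.sub {n : ℕ} {a b : Rp} (ha : degGE n a) (hb : degGE n b) : degGE n (a - b) :=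
  fun d hd => by simp [coeff_sub, ha d hd, hb d hd]

lemma degGE.smul {n : ℕ} (c : ℂ) {a : Rp} (ha : degGE n a) : degGE n (c • a) :=
  fun d hd => by simp [coeff_smul, ha d hd]

lemma degGE.mul {m n : ℕ} {a b : Rp} (ha : degGE m a) (hb : degGE n b) :
    degGE (m + n) (a * b) := by
  intro d hd
  rw [coeff_mul]
  refine Finset.sum_eq_zero fun p hp => ?_
  rw [Finset.HasAntidiagonal.mem_antidiagonal] at hp
  have h0 : p.1 0 + p.2 0 = d 0 := by rw [← hp]; simp
  have h1 : p.1 1 + p.2 1 = d 1 := by rw [← hp]; simp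
  rcases lt_or_ge (p.1 0 + p.1 1) m with hlt | hge
  · rw [ha p.1 hlt, zero_mul]
  · rw [hb p.2 (by omega), mul_zero]

lemma degGE.mul_left {n : ℕ} (r : Rp) {a : Rp} (ha : degGE n a) : degGE n (r * a) :=
  by simpa using (degGE_any r).mul ha

lemma degGE.pderiv {n : ℕ} {a : Rp} (ha : degGE (n + 1) a) (i : Fin 2) :
    degGE n (pderiv i a) := by
  intro d hd
  conv_lhs => rw [a.as_sum]
  rw [map_sum]
  rw [coeff_sum]
  refine Finset.sum_eq_zero fun e he => ?_
  rw [pderiv_monomial, coeff_monomial]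
  split_ifs with hEq
  · rcases Nat.eq_zero_or_pos (e i) with h0 | hpos
    · simp [h0]
    · exfalso
      have hd0 : d 0 = e 0 - (Finsupp.single i (1:ℕ)) 0 := by
        rw [← hEq]; exact Finsupp.tsub_apply e (Finsupp.single i 1) 0
      have hd1 : d 1 = e 1 - (Finsupp.single i (1:ℕ)) 1 := by
        rw [← hEq]; exact Finsupp.tsub_apply e (Finsupp.single i 1) 1
      have hsum : e 0 + e 1 < n + 1 := by
        fin_cases i <;> simp [Finsupp.single_apply] at hd0 hd1 hpos ⊢ <;> omega
      exact (mem_support_iff.mp he) (ha e hsum)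
  · rfl



-- bridge: support form
lemma degGE_iff_support {n : ℕ} {a : Rp} :
    degGE n a ↔ ∀ d ∈ a.support, n ≤ d 0 + d 1 := by
  constructor
  · intro h d hd
    by_contra hc
    exact (mem_support_iff.mp hd) (h d (by omega))
  · intro h d hd
    by_contra hc
    exact absurd (h d (mem_support_iff.mpr hc)) (by omega)

lemma single_le_iff {i : Fin 2} {m : ℕ} {d : Fin 2 →₀ ℕ} :
    Finsupp.single i m ≤ d ↔ m ≤ d i := by
  rw [Finsupp.le_def]
  constructor
  · intro h; simpa using h i
  · intro h j
    rcases eq_or_ne i j with rfl | hne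
    · simpa using h
    · simp [Finsupp.single_apply, hne]

lemma mem_Jex_iff {a : Rp} : a ∈ Jex ↔ degGE 1 a := by
  rw [degGE_iff_support]
  have himg : ({X 0, X 1} : Set Rp) =
      (fun s => monomial s (1:ℂ)) '' {Finsupp.single 0 1, Finsupp.single 1 1} := by
    rw [Set.image_insert_eq, Set.image_singleton]
    simp [X]
  show a ∈ Ideal.span {X 0, X 1} ↔ _
  rw [himg, mem_ideal_span_monomial_image]
  refine forall₂_congr fun d _ => ?_
  constructor
  · rintro ⟨s, hs, hle⟩
    rcases hs with rfl | rfl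
    · have := single_le_iff.mp hle; omega
    · have := single_le_iff.mp hle; omega
  · intro h
    rcases Nat.eq_zero_or_pos (d 0) with h0 | h0
    · exact ⟨Finsupp.single 1 1, Or.inr rfl, single_le_iff.mpr (by omega)⟩
    · exact ⟨Finsupp.single 0 1, Or.inl rfl, single_le_iff.mpr h0⟩

lemma add_single_le_iff {a b : ℕ} {d : Fin 2 →₀ ℕ} :
    Finsupp.single (0 : Fin 2) a + Finsupp.single 1 b ≤ d ↔ a ≤ d 0 ∧ b ≤ d 1 := by
  rw [Finsupp.le_def]
  constructor
  · intro h
    constructor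
    · simpa [Finsupp.single_apply] using h 0
    · simpa [Finsupp.single_apply] using h 1
  · rintro ⟨h0, h1⟩ j
    fin_cases j <;> simp [Finsupp.single_apply] <;> omega

lemma mem_Iex_iff {a : Rp} : a ∈ Iex ↔ degGE 3 a := by
  rw [degGE_iff_support]
  have e1 : (X 0 ^ 3 : Rp) = monomial (Finsupp.single 0 3 + Finsupp.single 1 0) 1 := by
    simp [X_pow_eq_monomial]
  have e2 : (X 0 ^ 2 * X 1 : Rp) = monomial (Finsupp.single 0 2 + Finsupp.single 1 1) 1 := by
    rw [X_pow_eq_monomial, X, monomial_mul, mul_one]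
  have e3 : (X 0 * X 1 ^ 2 : Rp) = monomial (Finsupp.single 0 1 + Finsupp.single 1 2) 1 := by
    rw [X_pow_eq_monomial, X, monomial_mul, mul_one]
  have e4 : (X 1 ^ 3 : Rp) = monomial (Finsupp.single 0 0 + Finsupp.single 1 3) 1 := by
    simp [X_pow_eq_monomial]
  have himg : ({X 0 ^ 3, X 0 ^ 2 * X 1, X 0 * X 1 ^ 2, X 1 ^ 3} : Set Rp) =
      (fun s => monomial s (1:ℂ)) ''
        {Finsupp.single 0 3 + Finsupp.single 1 0, Finsupp.single 0 2 + Finsupp.single 1 1,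
         Finsupp.single 0 1 + Finsupp.single 1 2, Finsupp.single 0 0 + Finsupp.single 1 3} := by
    rw [Set.image_insert_eq, Set.image_insert_eq, Set.image_insert_eq, Set.image_singleton]
    rw [e1, e2, e3, e4]
  show a ∈ Ideal.span {X 0 ^ 3, X 0 ^ 2 * X 1, X 0 * X 1 ^ 2, X 1 ^ 3} ↔ _
  rw [himg, mem_ideal_span_monomial_image]
  refine forall₂_congr fun d _ => ?_
  constructor
  · rintro ⟨s, hs, hle⟩
    rcases hs with rfl | rfl | rfl | rfl <;>
      · have := add_single_le_iff.mp hle; omega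
  · intro h
    rcases Nat.lt_or_ge (d 0) 1 with h0 | h0
    · exact ⟨_, Or.inr (Or.inr (Or.inr rfl)), add_single_le_iff.mpr (by omega)⟩
    rcases Nat.lt_or_ge (d 0) 2 with h1 | h1
    · exact ⟨_, Or.inr (Or.inr (Or.inl rfl)), add_single_le_iff.mpr (by omega)⟩
    rcases Nat.lt_or_ge (d 0) 3 with h2 | h2
    · exact ⟨_, Or.inr (Or.inl rfl), add_single_le_iff.mpr (by omega)⟩
    · exact ⟨_, Or.inl rfl, add_single_le_iff.mpr (by omega)⟩


def d3 (i j k : Fin 2) (a : Rp) : Rp := pderiv i (pderiv j (pderiv k a))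

lemma d3_expand (i j k : Fin 2) (r a : Rp) :
    d3 i j k (r * a) - r * d3 i j k a =
      pderiv i (pderiv j (pderiv k r)) * a
      + pderiv j (pderiv k r) * pderiv i a
      + pderiv i (pderiv k r) * pderiv j a
      + pderiv i (pderiv j r) * pderiv k a
      + pderiv k r * pderiv i (pderiv j a)
      + pderiv j r * pderiv i (pderiv k a)
      + pderiv i r * pderiv j (pderiv k a) := by
  simp only [d3, pderiv_mul, map_add]
  ring

lemma degGE_d3_sub (i j k : Fin 2) (r : Rp) {a : Rp} (ha : degGE 3 a) :
    degGE 1 (d3 i j k (r * a) - r * d3 i j k a) := by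
  rw [d3_expand]
  have h2 : ∀ x : Fin 2, degGE 2 (pderiv x a) := fun x => ha.pderiv x
  have h1 : ∀ x y : Fin 2, degGE 1 (pderiv x (pderiv y a)) := fun x y => (h2 y).pderiv x
  exact (((((((degGE.mul_left _ (ha.mono (by omega))).add
    (degGE.mul_left _ ((h2 i).mono (by omega)))).add
    (degGE.mul_left _ ((h2 j).mono (by omega)))).add
    (degGE.mul_left _ ((h2 k).mono (by omega)))).add
    (degGE.mul_left _ (h1 i j))).add
    (degGE.mul_left _ (h1 i k))).add
    (degGE.mul_left _ (h1 j k)))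

/-- the tangent vector `a ↦ q · ∂i∂j∂k a  mod I` for `q` of degree ≥ 2. -/
def fHom (q : Rp) (hq : degGE 2 q) (i j k : Fin 2) : ↥Iex →ₗ[Rp] Rp ⧸ Iex where
  toFun a := Submodule.Quotient.mk (q * d3 i j k (a : Rp))
  map_add' a b := by
    have : d3 i j k ((a : Rp) + b) = d3 i j k (a : Rp) + d3 i j k (b : Rp) := by
      simp [d3, map_add]
    simp only [Submodule.coe_add, this, mul_add]
    rw [Submodule.Quotient.mk_add]
  map_smul' r a := by
    simp only [SetLike.val_smul, smul_eq_mul, RingHom.id_apply]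
    rw [← Submodule.Quotient.mk_smul, Submodule.Quotient.eq, smul_eq_mul]
    have key : q * d3 i j k (r * (a : Rp)) - r * (q * d3 i j k (a : Rp))
        = q * (d3 i j k (r * (a : Rp)) - r * d3 i j k (a : Rp)) := by ring
    show _ ∈ Iex
    rw [key, mem_Iex_iff]
    exact (hq.mul (degGE_d3_sub i j k r (mem_Iex_iff.mp a.2))).mono (by omega)

/-- the tangent vector `a ↦ ∂i a mod J`. -/
def gHom (i : Fin 2) : ↥Jex →ₗ[Rp] Rp ⧸ Jex where
  toFun a := Submodule.Quotient.mk (pderiv i (a : Rp))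
  map_add' a b := by
    simp only [Submodule.coe_add, map_add]
    rw [Submodule.Quotient.mk_add]
  map_smul' r a := by
    simp only [SetLike.val_smul, smul_eq_mul, RingHom.id_apply]
    rw [← Submodule.Quotient.mk_smul, Submodule.Quotient.eq, smul_eq_mul]
    show _ ∈ Jex
    have : pderiv i (r * (a : Rp)) - r * pderiv i (a : Rp) = pderiv i r * (a : Rp) := by
      rw [pderiv_mul]; ring
    rw [this, mem_Jex_iff]
    exact degGE.mul_left _ (mem_Jex_iff.mp a.2)

lemma Iex_le_Jex : Iex ≤ Jex := fun a ha =>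
  mem_Jex_iff.mpr ((mem_Iex_iff.mp ha).mono (by omega))

/-! ### data -/

def tpl : Fin 4 → Fin 2 × Fin 2 × Fin 2 := ![(0,0,0),(0,0,1),(0,1,1),(1,1,1)]
def G : Fin 4 → Rp := ![X 0 ^ 3, X 0 ^ 2 * X 1, X 0 * X 1 ^ 2, X 1 ^ 3]
def cNat : Fin 4 → ℕ := ![6, 2, 2, 6]

lemma pderiv_natCast (i : Fin 2) (n : ℕ) : pderiv i ((n : ℕ) : Rp) = 0 := by
  rw [← map_natCast (C : ℂ →+* Rp) n, pderiv_C]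

lemma dval : ∀ ti mg : Fin 4,
    d3 (tpl ti).1 (tpl ti).2.1 (tpl ti).2.2 (G mg) = if ti = mg then ((cNat mg : ℕ) : Rp) else 0 := by
  intro ti mg
  fin_cases ti <;> fin_cases mg <;>
    simp [-Nat.cast_ofNat, d3, tpl, G, cNat, pderiv_pow, pderiv_mul, pderiv_natCast] <;>
    norm_num

lemma G_mem (m : Fin 4) : G m ∈ Iex := by
  fin_cases m <;> exact Ideal.subset_span (by simp [G])

lemma X_mem (l : Fin 2) : (X l : Rp) ∈ Jex := by
  fin_cases l <;> exact Ideal.subset_span (by simp)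

def quadExp : Fin 3 → (Fin 2 →₀ ℕ) :=
  ![Finsupp.single 0 2, Finsupp.single 0 1 + Finsupp.single 1 1, Finsupp.single 1 2]

lemma quadExp_sum (m : Fin 3) : quadExp m 0 + quadExp m 1 = 2 := by
  fin_cases m <;> simp [quadExp]

lemma quadExp_inj {m n : Fin 3} (h : quadExp m = quadExp n) : m = n := by
  fin_cases m <;> fin_cases n <;> first
    | rfl
    | (exfalso
       have h0 := DFunLike.congr_fun h (0 : Fin 2)
       simp [quadExp, Finsupp.single_apply] at h0)

def qs (m : Fin 3) : Rp := monomial (quadExp m) 1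

lemma hqs (m : Fin 3) : degGE 2 (qs m) := by
  intro d hd
  rw [qs, coeff_monomial]
  split_ifs with hEq
  · exfalso; rw [← hEq] at hd; have := quadExp_sum m; omega
  · rfl

lemma coeff_qs (m n : Fin 3) : coeff (quadExp m) (qs n) = if n = m then 1 else 0 := by
  rw [qs, coeff_monomial]
  by_cases h : n = m
  · subst h; simp
  · rw [if_neg (fun hEq => h (quadExp_inj hEq)), if_neg h]

/-! ### coefficient functionals on the quotients -/

def cfI (m : Fin 3) : (Rp ⧸ Iex) →ₗ[ℂ] ℂ :=
  (Submodule.liftQ (Submodule.restrictScalars ℂ (Iex : Submodule Rp Rp))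
      (lcoeff ℂ (quadExp m))
      (fun w hw => LinearMap.mem_ker.mpr
        (mem_Iex_iff.mp hw (quadExp m) (by have := quadExp_sum m; omega)))).comp
    (Submodule.Quotient.restrictScalarsEquiv ℂ (Iex : Submodule Rp Rp)).symm.toLinearMap

lemma cfI_mk (m : Fin 3) (w : Rp) :
    cfI m (Submodule.Quotient.mk w) = coeff (quadExp m) w := rfl

def cfJ : (Rp ⧸ Jex) →ₗ[ℂ] ℂ :=
  (Submodule.liftQ (Submodule.restrictScalars ℂ (Jex : Submodule Rp Rp))
      (lcoeff ℂ (0 : Fin 2 →₀ ℕ))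
      (fun w hw => LinearMap.mem_ker.mpr (mem_Jex_iff.mp hw 0 (by simp)))).comp
    (Submodule.Quotient.restrictScalarsEquiv ℂ (Jex : Submodule Rp Rp)).symm.toLinearMap

lemma cfJ_mk (w : Rp) : cfJ (Submodule.Quotient.mk w) = coeff 0 w := rfl

/-! ### evaluation maps -/

def evalI (a : ↥Iex) : (↥Iex →ₗ[Rp] Rp ⧸ Iex) →ₗ[ℂ] Rp ⧸ Iex where
  toFun f := f a
  map_add' f g := rfl
  map_smul' c f := rfl

def evalJ (a : ↥Jex) : (↥Jex →ₗ[Rp] Rp ⧸ Jex) →ₗ[ℂ] Rp ⧸ Jex where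
  toFun f := f a
  map_add' f g := rfl
  map_smul' c f := rfl

/-! ### kernel membership -/

lemma psiMinusPhi_apply (h : Iex ≤ Jex) (f : ↥Iex →ₗ[Rp] Rp ⧸ Iex)
    (g : ↥Jex →ₗ[Rp] Rp ⧸ Jex) (a : ↥Iex) :
    psiMinusPhi ℂ Iex Jex h (f, g) a
      = Submodule.mapQ Iex Jex LinearMap.id (fun _ hx => h hx) (f a)
        - g (Submodule.inclusion h a) := rfl

lemma mem_ker_f (h : Iex ≤ Jex) (q : Rp) (hq : degGE 2 q) (i j k : Fin 2) :
    (fHom q hq i j k, (0 : ↥Jex →ₗ[Rp] Rp ⧸ Jex))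
      ∈ LinearMap.ker (psiMinusPhi ℂ Iex Jex h) := by
  rw [LinearMap.mem_ker]
  refine LinearMap.ext fun a => ?_
  rw [psiMinusPhi_apply]
  rw [show fHom q hq i j k a = Submodule.Quotient.mk (q * d3 i j k (a : Rp)) from rfl]
  rw [Submodule.mapQ_apply, LinearMap.zero_apply, sub_zero, LinearMap.id_apply,
    LinearMap.zero_apply, Submodule.Quotient.mk_eq_zero]
  exact mem_Jex_iff.mpr ((hq.mul (degGE_any (d3 i j k (a : Rp)))).mono (by omega))

lemma mem_ker_g (h : Iex ≤ Jex) (i : Fin 2) :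
    ((0 : ↥Iex →ₗ[Rp] Rp ⧸ Iex), gHom i)
      ∈ LinearMap.ker (psiMinusPhi ℂ Iex Jex h) := by
  rw [LinearMap.mem_ker]
  refine LinearMap.ext fun a => ?_
  rw [psiMinusPhi_apply, LinearMap.zero_apply, map_zero, zero_sub, LinearMap.zero_apply,
    neg_eq_zero]
  rw [show gHom i (Submodule.inclusion h a)
      = Submodule.Quotient.mk (pderiv i ((Submodule.inclusion h a : ↥Jex) : Rp)) from rfl]
  rw [Submodule.Quotient.mk_eq_zero]
  have hcoe : ((Submodule.inclusion h a : ↥Jex) : Rp) = (a : Rp) := rfl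
  rw [hcoe, mem_Jex_iff]
  exact ((mem_Iex_iff.mp a.2).pderiv i).mono (by omega)

/-! ### evaluation computations -/

lemma cfI_fHom (qi p1 : Fin 3) (ti mg : Fin 4) :
    cfI qi (fHom (qs p1) (hqs p1) (tpl ti).1 (tpl ti).2.1 (tpl ti).2.2 ⟨G mg, G_mem mg⟩)
      = if ti = mg ∧ p1 = qi then (cNat mg : ℂ) else 0 := by
  rw [show fHom (qs p1) (hqs p1) (tpl ti).1 (tpl ti).2.1 (tpl ti).2.2 ⟨G mg, G_mem mg⟩
      = Submodule.Quotient.mk (qs p1 * d3 (tpl ti).1 (tpl ti).2.1 (tpl ti).2.2 (G mg)) from rfl]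
  rw [cfI_mk, dval]
  by_cases hti : ti = mg
  · rw [if_pos hti, ← map_natCast (C : ℂ →+* Rp) (cNat mg), mul_comm, coeff_C_mul, coeff_qs]
    by_cases hp : p1 = qi
    · simp [hti, hp]
    · simp [hti, hp]
  · simp [hti]

lemma cfJ_gHom (i l : Fin 2) :
    cfJ (gHom i ⟨X l, X_mem l⟩) = if i = l then 1 else 0 := by
  rw [show gHom i ⟨X l, X_mem l⟩ = Submodule.Quotient.mk (pderiv i (X l : Rp)) from rfl, cfJ_mk]
  fin_cases i <;> fin_cases l <;> simp

lemma cNat_ne (mg : Fin 4) : ((cNat mg : ℕ) : ℂ) ≠ 0 := by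
  fin_cases mg <;> norm_num [cNat]

/-! ### the main kernel rank bound -/

lemma ker_finrank_ne (h : Iex ≤ Jex) :
    Module.finrank ℂ ↥(LinearMap.ker (psiMinusPhi ℂ Iex Jex h)) ≠ 12 := by
  set K := LinearMap.ker (psiMinusPhi ℂ Iex Jex h) with hK
  let u : (Fin 3 × Fin 4) ⊕ Fin 2 → ((↥Iex →ₗ[Rp] Rp ⧸ Iex) × (↥Jex →ₗ[Rp] Rp ⧸ Jex)) :=
    Sum.elim
      (fun p => (fHom (qs p.1) (hqs p.1) (tpl p.2).1 (tpl p.2).2.1 (tpl p.2).2.2, 0))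
      (fun l => (0, gHom l))
  have humem : ∀ m, u m ∈ K := by
    rintro (p | l)
    · exact mem_ker_f h (qs p.1) (hqs p.1) _ _ _
    · exact mem_ker_g h l
  let v : (Fin 3 × Fin 4) ⊕ Fin 2 → ↥K := fun m => ⟨u m, humem m⟩
  have hu : LinearIndependent ℂ u := by
    rw [Fintype.linearIndependent_iff]
    intro g hg
    have hF : (∑ p : Fin 3 × Fin 4, g (Sum.inl p) •
        fHom (qs p.1) (hqs p.1) (tpl p.2).1 (tpl p.2).2.1 (tpl p.2).2.2) = 0 := by
      have hfst := congrArg Prod.fst hg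
      simpa [u, Fintype.sum_sum_type, Prod.fst_sum] using hfst
    have hG : (∑ l : Fin 2, g (Sum.inr l) • gHom l) = 0 := by
      have hsnd := congrArg Prod.snd hg
      simpa [u, Fintype.sum_sum_type, Prod.snd_sum] using hsnd
    rintro (⟨qi, mg⟩ | l)
    · have h1 := congrArg (cfI qi) (DFunLike.congr_fun hF ⟨G mg, G_mem mg⟩)
      simp only [LinearMap.sum_apply, LinearMap.smul_apply, map_sum, map_smul, cfI_fHom,
        map_zero, smul_eq_mul, mul_ite, mul_zero, LinearMap.zero_apply] at h1
      rw [Fintype.sum_prod_type] at h1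
      simp only [ite_and, Finset.sum_ite_irrel, Finset.sum_const_zero, Finset.sum_ite_eq',
        Finset.mem_univ, if_true] at h1
      exact (mul_eq_zero.mp h1).resolve_right (cNat_ne mg)
    · have h2 := congrArg cfJ (DFunLike.congr_fun hG ⟨X l, X_mem l⟩)
      simp only [LinearMap.sum_apply, LinearMap.smul_apply, map_sum, map_smul, cfJ_gHom,
        map_zero, smul_eq_mul, mul_ite, mul_zero, mul_one, LinearMap.zero_apply,
        Finset.sum_ite_eq', Finset.mem_univ, if_true] at h2
      exact h2
  have hv : LinearIndependent ℂ v := by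
    apply LinearIndependent.of_comp K.subtype
    exact hu
  have hcard : (14 : Cardinal) ≤ Module.rank ℂ ↥K := by
    have hle := hv.cardinal_le_rank
    have : Cardinal.mk ((Fin 3 × Fin 4) ⊕ Fin 2) = 14 := by
      simp [Cardinal.mk_sum, Cardinal.mk_prod, Cardinal.mk_fintype]
    rwa [this] at hle
  intro h12
  have hfr : Cardinal.toNat (Module.rank ℂ ↥K) = 12 := h12
  rcases lt_or_ge (Module.rank ℂ ↥K) Cardinal.aleph0 with hfin | hinf
  · have h14 : (14 : ℕ) ≤ Cardinal.toNat (Module.rank ℂ ↥K) := by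
      have := Cardinal.toNat_le_toNat hcard hfin
      simpa using this
    omega
  · rw [Cardinal.toNat_apply_of_aleph0_le hinf] at hfr
    exact absurd hfr (by norm_num)

/-! ### finrank of R/J -/

lemma finrank_J : Module.finrank ℂ (Rp ⧸ Jex) = 1 := by
  have hsurj : Function.Surjective (aeval (0 : Fin 2 → ℂ) : Rp →ₐ[ℂ] ℂ) := fun c =>
    ⟨C c, by simp⟩
  have hker : RingHom.ker (aeval (0 : Fin 2 → ℂ) : Rp →ₐ[ℂ] ℂ) = Jex := by
    ext a
    rw [RingHom.mem_ker, mem_Jex_iff]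
    have heval : (aeval (0 : Fin 2 → ℂ) : Rp →ₐ[ℂ] ℂ) a = coeff 0 a := by
      rw [aeval_zero]
      simp [constantCoeff_eq]
    rw [heval]
    constructor
    · intro h0 d hd
      have hd0 : d = 0 := by
        ext i; fin_cases i <;> simp <;> omega
      rwa [hd0]
    · intro hdeg
      exact hdeg 0 (by simp)
  have e : (Rp ⧸ Jex) ≃ₐ[ℂ] ℂ := hker ▸ Ideal.quotientKerAlgEquivOfSurjective hsurj
  rw [e.toLinearEquiv.finrank_eq]
  exact Module.finrank_self ℂ

/-! ### finrank of R/I -/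

def ds : Fin 6 → (Fin 2 →₀ ℕ) :=
  ![0, Finsupp.single 0 1, Finsupp.single 1 1,
    Finsupp.single 0 2, Finsupp.single 0 1 + Finsupp.single 1 1, Finsupp.single 1 2]

@[simp] lemma ds0 : ds 0 = 0 := rfl
@[simp] lemma ds1 : ds 1 = Finsupp.single 0 1 := rfl
@[simp] lemma ds2 : ds 2 = Finsupp.single 1 1 := rfl
@[simp] lemma ds3 : ds 3 = Finsupp.single 0 2 := rfl
@[simp] lemma ds4 : ds 4 = Finsupp.single 0 1 + Finsupp.single 1 1 := rfl
@[simp] lemma ds5 : ds 5 = Finsupp.single 1 2 := rfl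

lemma ds_sum (m : Fin 6) : ds m 0 + ds m 1 ≤ 2 := by
  fin_cases m <;> simp [Finsupp.single_apply]

lemma ds_inj {m n : Fin 6} (h : ds m = ds n) : m = n := by
  have h0 := DFunLike.congr_fun h (0 : Fin 2)
  have h1 := DFunLike.congr_fun h (1 : Fin 2)
  fin_cases m <;> fin_cases n <;> first
    | rfl
    | (exfalso; simp [Finsupp.single_apply] at h0 h1) | (exfalso; omega)

lemma ds_complete (d : Fin 2 →₀ ℕ) (hd : d 0 + d 1 ≤ 2) : ∃ m, ds m = d := by
  have hrep : ∀ (a b : ℕ), d 0 = a → d 1 = b →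
      d = Finsupp.single 0 a + Finsupp.single 1 b := by
    intro a b ha hb
    ext i; fin_cases i <;> simp [Finsupp.single_apply, ← ha, ← hb]
  match h0 : d 0, h1 : d 1 with
  | 0, 0 => exact ⟨0, by rw [hrep 0 0 h0 h1]; ext i; fin_cases i <;> simp⟩
  | 1, 0 => exact ⟨1, by rw [hrep 1 0 h0 h1]; ext i; fin_cases i <;> simp [Finsupp.single_apply]⟩
  | 0, 1 => exact ⟨2, by rw [hrep 0 1 h0 h1]; ext i; fin_cases i <;> simp [Finsupp.single_apply]⟩
  | 2, 0 => exact ⟨3, by rw [hrep 2 0 h0 h1]; ext i; fin_cases i <;> simp [Finsupp.single_apply]⟩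
  | 1, 1 => exact ⟨4, by rw [hrep 1 1 h0 h1]; ext i; fin_cases i <;> simp [Finsupp.single_apply]⟩
  | 0, 2 => exact ⟨5, by rw [hrep 0 2 h0 h1]; ext i; fin_cases i <;> simp [Finsupp.single_apply]⟩
  | a+3, b => exact absurd hd (by omega)
  | 1, b+2 => exact absurd hd (by omega)
  | 2, b+1 => exact absurd hd (by omega)
  | 0, b+3 => exact absurd hd (by omega)

def Lc : Rp →ₗ[ℂ] (Fin 6 → ℂ) := LinearMap.pi (fun m => lcoeff ℂ (ds m))

def Lbar : (Rp ⧸ Iex) →ₗ[ℂ] (Fin 6 → ℂ) :=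
  (Submodule.liftQ (Submodule.restrictScalars ℂ (Iex : Submodule Rp Rp)) Lc
      (fun w hw => by
        rw [LinearMap.mem_ker]
        funext m
        exact mem_Iex_iff.mp hw (ds m) (by have := ds_sum m; omega))).comp
    (Submodule.Quotient.restrictScalarsEquiv ℂ (Iex : Submodule Rp Rp)).symm.toLinearMap

lemma Lbar_mk (w : Rp) :
    Lbar (Submodule.Quotient.mk w) = fun m => coeff (ds m) w := rfl

def Mpoly : (Fin 6 → ℂ) →ₗ[ℂ] Rp where
  toFun w := ∑ m, w m • monomial (ds m) (1 : ℂ)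
  map_add' w₁ w₂ := by
    simp [add_smul, Finset.sum_add_distrib]
  map_smul' c w := by
    simp [Finset.smul_sum, smul_smul]

def Mq : (Fin 6 → ℂ) →ₗ[ℂ] (Rp ⧸ Iex) :=
  (((Submodule.Quotient.restrictScalarsEquiv ℂ (Iex : Submodule Rp Rp)).toLinearMap.comp
    (Submodule.restrictScalars ℂ (Iex : Submodule Rp Rp)).mkQ)).comp Mpoly

lemma Mq_apply (w : Fin 6 → ℂ) :
    Mq w = Submodule.Quotient.mk (∑ m, w m • monomial (ds m) (1 : ℂ)) := rfl

lemma coeff_ds_mono (m n : Fin 6) :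
    coeff (ds m) (monomial (ds n) (1 : ℂ)) = if n = m then 1 else 0 := by
  rw [coeff_monomial]
  by_cases h : n = m
  · subst h; simp
  · rw [if_neg (fun hEq => h (ds_inj hEq)), if_neg h]

lemma finrank_I : Module.finrank ℂ (Rp ⧸ Iex) = 6 := by
  have h1 : Lbar.comp Mq = LinearMap.id := by
    refine LinearMap.ext fun w => ?_
    rw [LinearMap.comp_apply, Mq_apply, Lbar_mk, LinearMap.id_apply]
    funext m
    simp only [coeff_sum, coeff_smul, coeff_ds_mono, smul_eq_mul, mul_ite, mul_one, mul_zero]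
    simp [Finset.sum_ite_eq', Finset.mem_univ]
  have h2 : Mq.comp Lbar = LinearMap.id := by
    refine LinearMap.ext fun x => ?_
    obtain ⟨a, rfl⟩ := Submodule.Quotient.mk_surjective Iex x
    rw [LinearMap.comp_apply, Lbar_mk, Mq_apply, LinearMap.id_apply]
    rw [Submodule.Quotient.eq]
    rw [mem_Iex_iff]
    intro d hd
    have ⟨m0, hm0⟩ := ds_complete d (by omega)
    rw [coeff_sub, coeff_sum, ← hm0]
    simp only [coeff_smul, coeff_ds_mono, smul_eq_mul, mul_ite, mul_one, mul_zero]
    simp [Finset.sum_ite_eq', Finset.mem_univ]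
  have e : (Rp ⧸ Iex) ≃ₗ[ℂ] (Fin 6 → ℂ) := LinearEquiv.ofLinear Lbar Mq h1 h2
  rw [e.finrank_eq, Module.finrank_pi]
  simp

end NestedAux
/-- For `J = (x,y)` and `I = (x³, x²y, xy², y³)` in `ℂ[x,y]`, the tangent space
`Ker(ψ - φ)` of the nested Hilbert scheme at `(I,J)` does not have dimension `2·6 = 12`,
so `(I,J)` is a singular point. -/

theorem nested_example_singular :
    ∀ (I J : Ideal (MvPolynomial (Fin 2) ℂ)),
      I = Ideal.span {X 0 ^ 3, X 0 ^ 2 * X 1, X 0 * X 1 ^ 2, X 1 ^ 3} →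
      J = Ideal.span {X 0, X 1} →
      ∀ h : I ≤ J,
        Module.finrank ℂ (MvPolynomial (Fin 2) ℂ ⧸ I) = 6 ∧
        Module.finrank ℂ (MvPolynomial (Fin 2) ℂ ⧸ J) = 1 ∧
        Module.finrank ℂ ↥(LinearMap.ker (psiMinusPhi ℂ I J h)) ≠ 12 := by
  rintro I J rfl rfl h
  exact ⟨finrank_I, finrank_J, ker_finrank_ne h⟩
end
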